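/- arXiv:2505.00944 — 7 statements merged into one kernel-verified Lean document; each statement's English description precedes it below -/
import Mathlib

section
/- Let h: (0,∞) → ℝ be integrable with ∫₀^∞ h(x) dx = 0. Suppose there exists x₀ > 0 such that h ≤ 0 on (0,x₀) and h ≥ 0 on (x₀,∞), and h is nonzero on a set of positive measure. If x·h(x) is integrable, then ∫₀^∞ x·h(x) dx > 0. -/
open MeasureTheory Set

theorem stmt_4 (h : ℝ → ℝ) (hInt : IntegrableOn h (Set.Ioi 0))
    (hzero : (∫ x in Set.Ioi (0 : ℝ), h x) = 0)
    (x₀ : ℝ) (hx₀ : 0 < x₀)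
    (hneg : ∀ x ∈ Set.Ioo 0 x₀, h x ≤ 0)
    (hpos : ∀ x ∈ Set.Ioi x₀, 0 ≤ h x)
    (hne : 0 < volume {x | x ∈ Set.Ioi (0 : ℝ) ∧ h x ≠ 0})
    (hInt2 : IntegrableOn (fun x => x * h x) (Set.Ioi 0)) :
    0 < ∫ x in Set.Ioi (0 : ℝ), x * h x := by
  set g : ℝ → ℝ := fun x => (x - x₀) * h x with hg
  have hg_int : IntegrableOn g (Set.Ioi 0) := by
    have : IntegrableOn (fun x => x * h x - x₀ * h x) (Set.Ioi 0) :=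
      hInt2.sub (hInt.const_mul x₀)
    refine this.congr_fun (fun x _ => by ring) measurableSet_Ioi
  have hg_nonneg : 0 ≤ᵐ[volume.restrict (Set.Ioi (0:ℝ))] g := by
    filter_upwards [ae_restrict_mem measurableSet_Ioi] with x hx
    simp only [Pi.zero_apply, hg]
    rcases lt_trichotomy x x₀ with hlt | heq | hgt
    · have := hneg x ⟨hx, hlt⟩
      have : 0 ≤ (x₀ - x) * (-h x) := mul_nonneg (by linarith) (by linarith)
      nlinarith
    · simp [heq]
    · exact mul_nonneg (by linarith) (hpos x hgt)
  have hval : (∫ x in Set.Ioi (0:ℝ), g x) = ∫ x in Set.Ioi (0:ℝ), x * h x := by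
    have : (∫ x in Set.Ioi (0:ℝ), g x)
        = (∫ x in Set.Ioi (0:ℝ), x * h x) - ∫ x in Set.Ioi (0:ℝ), x₀ * h x := by
      rw [← integral_sub hInt2 (hInt.const_mul x₀)]
      exact setIntegral_congr_fun measurableSet_Ioi (fun x _ => by ring)
    rw [this, integral_const_mul, hzero]
    ring
  rw [← hval]
  rw [setIntegral_pos_iff_support_of_nonneg_ae hg_nonneg hg_int]
  have hsub : {x | x ∈ Set.Ioi (0:ℝ) ∧ h x ≠ 0} \ {x₀} ⊆ Function.support g ∩ Set.Ioi 0 := by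
    rintro x ⟨⟨hx, hne0⟩, hx0⟩
    refine ⟨?_, hx⟩
    simp only [Function.mem_support, hg]
    exact mul_ne_zero (sub_ne_zero.mpr (by simpa using hx0)) hne0
  calc 0 < volume ({x | x ∈ Set.Ioi (0:ℝ) ∧ h x ≠ 0} \ {x₀}) := by
        rwa [measure_diff_null (measure_singleton x₀)]
    _ ≤ _ := measure_mono hsub
end

section
/- Let ℰ, ℰ' be i.i.d. standard exponential random variables and let a ≥ b ≥ 0 with (a,b) ≠ (0,0). Set X_{a,b} = a(ℰ−1) − b(ℰ'−1). Then P(X_{a,b} > 0) = (1/e)·e^{b/a}/(1 + b/a) and E|X_{a,b}| = 2a·P(X_{a,b} > 0). -/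
open MeasureTheory ProbabilityTheory Real Set

/-- Density of a standard exponential random variable. -/
noncomputable def expPDF : ℝ → ℝ := fun x => if 0 < x then Real.exp (-x) else 0

/-- `X` has density `f` with respect to Lebesgue measure. -/
def HasDensity {Ω : Type*} [MeasurableSpace Ω] (P : Measure Ω) (X : Ω → ℝ) (f : ℝ → ℝ) : Prop :=
  Measurable X ∧ Measure.map X P = volume.withDensity (fun x => ENNReal.ofReal (f x))

open scoped ENNReal

/-!
For `t ≥ 0` the event `X > t` is `a E - b E' > a - b + t`, with a nonnegative threshold because
`b ≤ a`. Integrating the exponential tail `P(E > s) = e^{-s}` against the law of `E'` gives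
`P(X > t) = e^{-(a-b+t)/a} E[e^{-(b/a) E'}] = p e^{-t/a}` with `p = e^{b/a - 1} / (1 + b/a)`.
Since `E X = 0`, the layer cake formula gives `E|X| = 2 E X⁺ = 2 ∫₀^∞ p e^{-t/a} dt = 2 a p`.
-/

lemma lintegral_ofReal_exp_mul_Ioi {r : ℝ} (hr : r < 0) (c : ℝ) :
    ∫⁻ x in Ioi c, ENNReal.ofReal (exp (r * x)) = ENNReal.ofReal (-exp (r * c) / r) := by
  rw [← ofReal_integral_eq_lintegral_ofReal (integrableOn_exp_mul_Ioi hr c)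
    (.of_forall fun x => (exp_pos _).le), integral_exp_mul_Ioi hr]

section LayerCake

variable {Ω : Type*} [MeasurableSpace Ω] {μ : Measure Ω}

lemma integrable_and_integral_eq_of_meas_lt_eq {Y : Ω → ℝ} (hY : AEMeasurable Y μ)
    (hY₀ : 0 ≤ᵐ[μ] Y) {K s : ℝ} (hK : 0 ≤ K) (hs : 0 < s)
    (htail : ∀ t, 0 < t → μ {ω | t < Y ω} = ENNReal.ofReal (K * exp (-(t / s)))) :
    Integrable Y μ ∧ ∫ ω, Y ω ∂μ = K * s := by
  have hlin : ∫⁻ ω, ENNReal.ofReal (Y ω) ∂μ = ENNReal.ofReal (K * s) := by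
    have hr : -s⁻¹ < 0 := by simpa using hs
    calc ∫⁻ ω, ENNReal.ofReal (Y ω) ∂μ
        = ∫⁻ t in Ioi 0, ENNReal.ofReal K * ENNReal.ofReal (exp (-s⁻¹ * t)) := by
          rw [lintegral_eq_lintegral_meas_lt μ hY₀ hY]
          refine setLIntegral_congr_fun measurableSet_Ioi fun t ht => ?_
          rw [htail t ht, ENNReal.ofReal_mul hK, neg_mul, div_eq_inv_mul]
      _ = ENNReal.ofReal (K * s) := by
          rw [lintegral_const_mul _ (by fun_prop), lintegral_ofReal_exp_mul_Ioi hr,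
            ← ENNReal.ofReal_mul hK]
          simp
  have hint : Integrable Y μ :=
    (lintegral_ofReal_ne_top_iff_integrable hY.aestronglyMeasurable hY₀).mp
      (hlin ▸ ENNReal.ofReal_ne_top)
  refine ⟨hint, ?_⟩
  rw [integral_eq_lintegral_of_nonneg_ae hY₀ hY.aestronglyMeasurable, hlin,
    ENNReal.toReal_ofReal (by positivity)]

lemma integral_abs_eq_two_mul_integral_max_zero {f : Ω → ℝ} (hf : Integrable f μ)
    (hf₀ : ∫ ω, f ω ∂μ = 0) : ∫ ω, |f ω| ∂μ = 2 * ∫ ω, max (f ω) 0 ∂μ := by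
  have habs (x : ℝ) : |x| = 2 * max x 0 - x := by
    rcases le_total x 0 with h | h
    · rw [abs_of_nonpos h, max_eq_right h]; ring
    · rw [abs_of_nonneg h, max_eq_left h]; ring
  simp only [habs]
  rw [integral_sub (hf.pos_part.const_mul 2) hf, integral_const_mul, hf₀, sub_zero]

end LayerCake

noncomputable def stdExpMeasure : Measure ℝ :=
  volume.withDensity fun x => ENNReal.ofReal (expPDF x)

lemma measurable_ofReal_expPDF : Measurable fun x => ENNReal.ofReal (expPDF x) :=
  (Measurable.ite measurableSet_Ioi (by fun_prop) measurable_const).ennreal_ofReal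

lemma ofReal_expPDF_eq_indicator :
    (fun x => ENNReal.ofReal (expPDF x)) = (Ioi 0).indicator fun x => ENNReal.ofReal (exp (-x)) := by
  ext x
  by_cases hx : 0 < x <;> simp [expPDF, hx]

lemma ae_stdExpMeasure_pos : ∀ᵐ x ∂stdExpMeasure, 0 < x := by
  rw [stdExpMeasure, ae_withDensity_iff measurable_ofReal_expPDF]
  refine .of_forall fun x hx => ?_
  by_contra h
  simp [expPDF, h] at hx

lemma lintegral_stdExpMeasure (g : ℝ → ℝ≥0∞) :
    ∫⁻ x, g x ∂stdExpMeasure = ∫⁻ x in Ioi 0, ENNReal.ofReal (exp (-x)) * g x := by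
  rw [stdExpMeasure, lintegral_withDensity_eq_lintegral_mul_non_measurable _
    measurable_ofReal_expPDF (.of_forall fun _ => ENNReal.ofReal_lt_top),
    ofReal_expPDF_eq_indicator, ← lintegral_indicator measurableSet_Ioi]
  congr 1
  ext x
  by_cases hx : 0 < x <;> simp [hx]

lemma stdExpMeasure_Ioi {c : ℝ} (hc : 0 ≤ c) :
    stdExpMeasure (Ioi c) = ENNReal.ofReal (exp (-c)) := by
  rw [stdExpMeasure, withDensity_apply _ measurableSet_Ioi, ofReal_expPDF_eq_indicator,
    lintegral_indicator measurableSet_Ioi, Measure.restrict_restrict measurableSet_Ioi,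
    Ioi_inter_Ioi, max_eq_right hc]
  simpa using lintegral_ofReal_exp_mul_Ioi neg_one_lt_zero c

lemma lintegral_exp_neg_mul_stdExpMeasure {s : ℝ} (hs : -1 < s) :
    ∫⁻ x, ENNReal.ofReal (exp (-(s * x))) ∂stdExpMeasure = ENNReal.ofReal (1 / (1 + s)) := by
  have hr : -(1 + s) < 0 := by linarith
  calc ∫⁻ x, ENNReal.ofReal (exp (-(s * x))) ∂stdExpMeasure
      = ∫⁻ x in Ioi 0, ENNReal.ofReal (exp (-(1 + s) * x)) := by
        rw [lintegral_stdExpMeasure]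
        refine lintegral_congr fun x => ?_
        rw [← ENNReal.ofReal_mul (exp_pos _).le, ← exp_add]
        ring_nf
    _ = ENNReal.ofReal (1 / (1 + s)) := by
        rw [lintegral_ofReal_exp_mul_Ioi hr]
        congr 1
        field_simp
        simp

instance : IsProbabilityMeasure stdExpMeasure :=
  ⟨by simpa using lintegral_exp_neg_mul_stdExpMeasure (s := 0) neg_one_lt_zero⟩

lemma stdExpMeasure_prod_setOf_lt {a b c : ℝ} (ha : 0 < a) (hb : 0 ≤ b) (hc : 0 ≤ c) :
    (stdExpMeasure.prod stdExpMeasure) {p : ℝ × ℝ | c < a * p.1 - b * p.2}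
      = ENNReal.ofReal (exp (-(c / a)) / (1 + b / a)) := by
  have hS : MeasurableSet {p : ℝ × ℝ | c < a * p.1 - b * p.2} :=
    measurableSet_lt measurable_const (by fun_prop)
  have hslice (y : ℝ) : (fun x => (x, y)) ⁻¹' {p : ℝ × ℝ | c < a * p.1 - b * p.2}
      = Ioi ((c + b * y) / a) := by
    ext x
    simp only [mem_preimage, mem_ofPred_eq, mem_Ioi, div_lt_iff₀ ha]
    constructor <;> intro h <;> linarith
  calc (stdExpMeasure.prod stdExpMeasure) {p : ℝ × ℝ | c < a * p.1 - b * p.2}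
      = ∫⁻ y, stdExpMeasure (Ioi ((c + b * y) / a)) ∂stdExpMeasure := by
        rw [Measure.prod_apply_symm hS]
        simp only [hslice]
    _ = ∫⁻ y, ENNReal.ofReal (exp (-(c / a))) * ENNReal.ofReal (exp (-(b / a * y)))
          ∂stdExpMeasure := by
        refine lintegral_congr_ae (ae_stdExpMeasure_pos.mono fun y hy => ?_)
        dsimp only
        rw [stdExpMeasure_Ioi (by positivity), ← ENNReal.ofReal_mul (exp_pos _).le, ← exp_add]
        congr 2
        field_simp
        ring
    _ = ENNReal.ofReal (exp (-(c / a)) / (1 + b / a)) := by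
        rw [lintegral_const_mul _ (by fun_prop),
          lintegral_exp_neg_mul_stdExpMeasure (by linarith [div_nonneg hb ha.le]),
          ← ENNReal.ofReal_mul (exp_pos _).le, mul_one_div]

namespace HasDensity

variable {Ω : Type*} [MeasurableSpace Ω] {P : Measure Ω} {X Y : Ω → ℝ}

lemma map_eq_stdExpMeasure (hX : HasDensity P X expPDF) : P.map X = stdExpMeasure := hX.2

lemma ae_pos (hX : HasDensity P X expPDF) : ∀ᵐ ω ∂P, 0 < X ω :=
  ae_of_ae_map hX.1.aemeasurable (hX.map_eq_stdExpMeasure ▸ ae_stdExpMeasure_pos)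

lemma measure_lt (hX : HasDensity P X expPDF) {t : ℝ} (ht : 0 ≤ t) :
    P {ω | t < X ω} = ENNReal.ofReal (exp (-t)) := by
  rw [← stdExpMeasure_Ioi ht, ← hX.map_eq_stdExpMeasure, Measure.map_apply hX.1 measurableSet_Ioi]
  rfl

lemma integrable_and_integral_eq_one (hX : HasDensity P X expPDF) :
    Integrable X P ∧ ∫ ω, X ω ∂P = 1 := by
  simpa using integrable_and_integral_eq_of_meas_lt_eq hX.1.aemeasurable
    (hX.ae_pos.mono fun _ h => h.le) zero_le_one one_pos fun t ht => by
      simpa using hX.measure_lt ht.le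

lemma integrable_and_integral_sub_one [IsProbabilityMeasure P] (hX : HasDensity P X expPDF) :
    Integrable (fun ω => X ω - 1) P ∧ ∫ ω, X ω - 1 ∂P = 0 := by
  obtain ⟨hint, hmean⟩ := hX.integrable_and_integral_eq_one
  refine ⟨hint.sub (integrable_const 1), ?_⟩
  rw [integral_sub hint (integrable_const 1), hmean]
  simp

lemma measure_lt_mul_sub_mul [IsFiniteMeasure P] (hX : HasDensity P X expPDF)
    (hY : HasDensity P Y expPDF) (hind : IndepFun X Y P) {a b c : ℝ} (ha : 0 < a) (hb : 0 ≤ b)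
    (hc : 0 ≤ c) :
    P {ω | c < a * X ω - b * Y ω} = ENNReal.ofReal (exp (-(c / a)) / (1 + b / a)) := by
  have hpair : P.map (fun ω => (X ω, Y ω)) = stdExpMeasure.prod stdExpMeasure := by
    rw [(indepFun_iff_map_prod_eq_prod_map_map hX.1.aemeasurable hY.1.aemeasurable).mp hind,
      hX.map_eq_stdExpMeasure, hY.map_eq_stdExpMeasure]
  rw [← stdExpMeasure_prod_setOf_lt ha hb hc, ← hpair,
    Measure.map_apply (hX.1.prodMk hY.1) (measurableSet_lt measurable_const (by fun_prop))]
  rfl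

lemma measure_lt_mul_sub_one_sub_mul_sub_one [IsFiniteMeasure P] (hX : HasDensity P X expPDF)
    (hY : HasDensity P Y expPDF) (hind : IndepFun X Y P) {a b t : ℝ} (ha : 0 < a) (hb : 0 ≤ b)
    (hab : b ≤ a) (ht : 0 ≤ t) :
    P {ω | t < a * (X ω - 1) - b * (Y ω - 1)}
      = ENNReal.ofReal (exp (b / a - 1) / (1 + b / a) * exp (-(t / a))) := by
  have hset : {ω | t < a * (X ω - 1) - b * (Y ω - 1)} = {ω | a - b + t < a * X ω - b * Y ω} := by
    ext ω
    simp only [mem_ofPred_eq]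
    constructor <;> intro h <;> linarith
  rw [hset, hX.measure_lt_mul_sub_mul hY hind ha hb (by linarith)]
  have hexp : -((a - b + t) / a) = b / a - 1 + -(t / a) := by field_simp; ring
  rw [hexp, exp_add]
  ring_nf

end HasDensity

theorem stmt_5 {Ω : Type} [MeasurableSpace Ω] (P : Measure Ω) [IsProbabilityMeasure P]
    (E E' : Ω → ℝ) (hE : HasDensity P E expPDF) (hE' : HasDensity P E' expPDF)
    (hind : IndepFun E E' P)
    (a b : ℝ) (hab : b ≤ a) (hb : 0 ≤ b) (ha : 0 < a) :
    P {ω | 0 < a * (E ω - 1) - b * (E' ω - 1)} =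
      ENNReal.ofReal ((1 / Real.exp 1) * Real.exp (b / a) / (1 + b / a)) ∧
    (∫ ω, |a * (E ω - 1) - b * (E' ω - 1)| ∂P) =
      2 * a * ((1 / Real.exp 1) * Real.exp (b / a) / (1 + b / a)) := by
  have hp : exp (b / a - 1) / (1 + b / a) = (1 / exp 1) * exp (b / a) / (1 + b / a) := by
    rw [exp_sub]
    ring
  set p := (1 / exp 1) * exp (b / a) / (1 + b / a)
  set X : Ω → ℝ := fun ω => a * (E ω - 1) - b * (E' ω - 1)
  have htail (t : ℝ) (ht : 0 ≤ t) : P {ω | t < X ω} = ENNReal.ofReal (p * exp (-(t / a))) := by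
    rw [← hp]
    exact hE.measure_lt_mul_sub_one_sub_mul_sub_one hE' hind ha hb hab ht
  refine ⟨by simpa only [zero_div, neg_zero, exp_zero, mul_one] using htail 0 le_rfl, ?_⟩
  obtain ⟨hEint, hEmean⟩ := hE.integrable_and_integral_sub_one
  obtain ⟨hE'int, hE'mean⟩ := hE'.integrable_and_integral_sub_one
  have hXint : Integrable X P := (hEint.const_mul a).sub (hE'int.const_mul b)
  have hXmean : ∫ ω, X ω ∂P = 0 := by
    rw [integral_sub (hEint.const_mul a) (hE'int.const_mul b), integral_const_mul,
      integral_const_mul, hEmean, hE'mean]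
    ring
  have hXpos : ∫ ω, max (X ω) 0 ∂P = p * a :=
    (integrable_and_integral_eq_of_meas_lt_eq (Y := fun ω => max (X ω) 0)
      (hXint.aemeasurable.max aemeasurable_const)
      (.of_forall fun _ => le_max_right _ _) (by positivity) ha fun t ht => by
        simpa only [lt_max_iff, or_iff_left (not_lt.mpr ht.le)] using htail t ht.le).2
  rw [integral_abs_eq_two_mul_integral_max_zero hXint hXmean, hXpos]
  ring
end

section
/- Let ℰ, ℰ' be i.i.d. standard exponential random variables, and for 0 ≤ t ≤ 1 set ℰ_t = (ℰ−1) − t(ℰ'−1). Then E|ℰ_t| = (2/e)·e^t/(1+t). -/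
open MeasureTheory ProbabilityTheory Real Set

/-!
Condition on `ℰ' = y` and put `c = 1 - t + t y`, which is `≥ 0` because `t ≤ 1`. Splitting
`|x - c| = (x - c) + 2 (c - x)⁺` gives `E|ℰ - c| = c - 1 + 2 e^{-c}`, the positive part contributing
`∫₀^c (c - x) e^{-x} dx = c - 1 + e^{-c}`. Averaging over `y`, the affine part `t (y - 1)` has mean
zero and `E e^{-t ℰ'} = 1 / (1 + t)`, which leaves `2 e^{t-1} / (1 + t)`.
-/

noncomputable def expLaw : Measure ℝ := volume.withDensity fun x => ENNReal.ofReal (expPDF x)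

lemma expPDF_eq_indicator : expPDF = (Ioi 0).indicator fun x => exp (-x) := by
  ext x
  simp [expPDF, indicator]

lemma expPDF_nonneg (x : ℝ) : 0 ≤ expPDF x := by
  rw [expPDF_eq_indicator]
  exact indicator_nonneg (fun _ _ => (exp_pos _).le) x

lemma measurable_expPDF : Measurable expPDF := by
  rw [expPDF_eq_indicator]
  exact measurable_neg.exp.indicator measurableSet_Ioi

lemma toReal_ofReal_expPDF_mul (g : ℝ → ℝ) (x : ℝ) :
    (ENNReal.ofReal (expPDF x)).toReal * g x = (Ioi 0).indicator (fun x => exp (-x) * g x) x := by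
  rw [ENNReal.toReal_ofReal (expPDF_nonneg x), expPDF_eq_indicator, indicator_mul_left]

lemma integral_expLaw (g : ℝ → ℝ) : ∫ x, g x ∂expLaw = ∫ x in Ioi 0, exp (-x) * g x := by
  rw [expLaw, integral_withDensity_eq_integral_toReal_smul measurable_expPDF.ennreal_ofReal
    (ae_of_all _ fun _ => ENNReal.ofReal_lt_top), ← integral_indicator measurableSet_Ioi]
  simp_rw [smul_eq_mul, toReal_ofReal_expPDF_mul]

lemma integrable_expLaw_iff {g : ℝ → ℝ} :
    Integrable g expLaw ↔ IntegrableOn (fun x => exp (-x) * g x) (Ioi 0) := by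
  rw [expLaw, integrable_withDensity_iff measurable_expPDF.ennreal_ofReal
    (ae_of_all _ fun _ => ENNReal.ofReal_lt_top), ← integrable_indicator_iff measurableSet_Ioi]
  simp_rw [mul_comm (g _), toReal_ofReal_expPDF_mul]

-- An infinite measure would have real mass `0`, so real mass `1` already forces mass `1`.
instance : IsProbabilityMeasure expLaw := by
  have h : expLaw.real univ = 1 := by
    simpa only [integral_const, smul_eq_mul, mul_one, Pi.one_apply, integral_exp_neg_Ioi_zero]
      using integral_expLaw 1
  exact ⟨(ENNReal.toReal_eq_one_iff _).1 h⟩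

lemma ae_pos_expLaw : ∀ᵐ x ∂expLaw, 0 < x := by
  refine (ae_withDensity_iff measurable_expPDF.ennreal_ofReal).2 (ae_of_all _ fun x hx => ?_)
  by_contra h
  simp [expPDF, h] at hx

lemma integrable_id_expLaw : Integrable (fun x => x) expLaw := by
  rw [integrable_expLaw_iff]
  simpa [show (2 : ℝ) - 1 = 1 by norm_num] using Real.GammaIntegral_convergent two_pos

lemma integral_id_expLaw : ∫ x, x ∂expLaw = 1 := by
  rw [integral_expLaw]
  simpa [show (2 : ℝ) - 1 = 1 by norm_num, Real.Gamma_two] using (Real.Gamma_eq_integral two_pos).symm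

lemma exp_neg_mul_exp_neg_mul (a x : ℝ) : exp (-x) * exp (-(a * x)) = exp (-(1 + a) * x) := by
  rw [← exp_add]
  ring_nf

lemma integrable_exp_neg_mul_expLaw {a : ℝ} (ha : -1 < a) :
    Integrable (fun x => exp (-(a * x))) expLaw := by
  rw [integrable_expLaw_iff]
  simpa only [exp_neg_mul_exp_neg_mul] using exp_neg_integrableOn_Ioi 0 (by linarith : 0 < 1 + a)

lemma integral_exp_neg_mul_expLaw {a : ℝ} (ha : -1 < a) :
    ∫ x, exp (-(a * x)) ∂expLaw = 1 / (1 + a) := by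
  rw [integral_expLaw]
  simp_rw [exp_neg_mul_exp_neg_mul]
  rw [integral_exp_mul_Ioi (by linarith) 0]
  simp only [mul_zero, exp_zero]
  field_simp

lemma intervalIntegral_exp_neg_mul_sub (c : ℝ) :
    ∫ x in 0..c, exp (-x) * (c - x) = c - 1 + exp (-c) := by
  have hderiv (x : ℝ) : HasDerivAt (fun x => (x - c + 1) * exp (-x)) (exp (-x) * (c - x)) x := by
    refine ((((hasDerivAt_id' x).sub_const c).add_const 1).mul (hasDerivAt_neg x).exp).congr_deriv ?_
    ring
  rw [intervalIntegral.integral_eq_sub_of_hasDerivAt (fun x _ => hderiv x)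
    (by apply Continuous.intervalIntegrable; fun_prop)]
  simp only [sub_self, zero_add, one_mul, neg_zero, exp_zero]
  ring

lemma integral_max_sub_zero_expLaw {c : ℝ} (hc : 0 ≤ c) :
    ∫ x, max (c - x) 0 ∂expLaw = c - 1 + exp (-c) := by
  rw [integral_expLaw, setIntegral_eq_of_subset_of_forall_sdiff_eq_zero measurableSet_Ioi
    Ioc_subset_Ioi_self (s := Ioc 0 c)]
  · rw [← intervalIntegral_exp_neg_mul_sub, intervalIntegral.integral_of_le hc]
    refine setIntegral_congr_fun measurableSet_Ioc fun x hx => ?_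
    rw [max_eq_left (by linarith [hx.2])]
  · intro x hx
    have hcx : c < x := by
      by_contra h
      exact hx.2 ⟨hx.1, not_lt.1 h⟩
    rw [max_eq_right (by linarith), mul_zero]

lemma integral_abs_sub_expLaw {c : ℝ} (hc : 0 ≤ c) :
    ∫ x, |x - c| ∂expLaw = c - 1 + 2 * exp (-c) := by
  have hsplit (x : ℝ) : |x - c| = (x - c) + 2 * max (c - x) 0 := by
    rcases le_total c x with h | h
    · rw [abs_of_nonneg (by linarith), max_eq_right (by linarith)]; ring
    · rw [abs_of_nonpos (by linarith), max_eq_left (by linarith)]; ring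
  have hlin : Integrable (fun x => x - c) expLaw := integrable_id_expLaw.sub (integrable_const c)
  have hpos : Integrable (fun x => max (c - x) 0) expLaw :=
    ((integrable_const c).sub integrable_id_expLaw).pos_part
  simp_rw [hsplit]
  rw [integral_add hlin (hpos.const_mul 2),
    integral_sub integrable_id_expLaw (integrable_const c), integral_const_mul,
    integral_id_expLaw, integral_max_sub_zero_expLaw hc]
  simp only [integral_const, probReal_univ, smul_eq_mul, one_mul]
  ring

lemma integral_affine_add_exp_expLaw {t : ℝ} (ht : -1 < t) :
    ∫ y, (1 - t + t * y) - 1 + 2 * exp (-(1 - t + t * y)) ∂expLaw = 2 * exp (t - 1) / (1 + t) := by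
  have hsplit_exp (y : ℝ) : exp (-(1 - t + t * y)) = exp (t - 1) * exp (-(t * y)) := by
    rw [← exp_add]; ring_nf
  simp_rw [hsplit_exp, show ∀ y : ℝ, 1 - t + t * y - 1 = t * y - t from fun y => by ring]
  have hlin : Integrable (fun y => t * y - t) expLaw :=
    (integrable_id_expLaw.const_mul t).sub (integrable_const t)
  have hexp_int : Integrable (fun y => 2 * (exp (t - 1) * exp (-(t * y)))) expLaw :=
    ((integrable_exp_neg_mul_expLaw ht).const_mul _).const_mul 2
  rw [integral_add hlin hexp_int,
    integral_sub (integrable_id_expLaw.const_mul t) (integrable_const t), integral_const_mul,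
    integral_const_mul, integral_const_mul, integral_id_expLaw, integral_exp_neg_mul_expLaw ht]
  simp only [mul_one, integral_const, probReal_univ, smul_eq_mul, one_mul, sub_self, one_div,
    zero_add]
  ring

lemma integral_comp_eq_integral_prod_of_indepFun {Ω : Type*} [MeasurableSpace Ω] {P : Measure Ω}
    [IsFiniteMeasure P] {X Y : Ω → ℝ} {f g : ℝ → ℝ} (hX : HasDensity P X f) (hY : HasDensity P Y g)
    (hXY : IndepFun X Y P) {F : ℝ × ℝ → ℝ} (hF : Continuous F) :
    ∫ ω, F (X ω, Y ω) ∂P = ∫ p, F p ∂((volume.withDensity fun x => ENNReal.ofReal (f x)).prod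
      (volume.withDensity fun x => ENNReal.ofReal (g x))) := by
  have hlaw : P.map (fun ω => (X ω, Y ω)) = (P.map X).prod (P.map Y) :=
    (indepFun_iff_map_prod_eq_prod_map_map hX.1.aemeasurable hY.1.aemeasurable).1 hXY
  rw [← hX.2, ← hY.2, ← hlaw,
    integral_map (hX.1.prodMk hY.1).aemeasurable hF.aestronglyMeasurable]

theorem stmt_8 {Ω : Type} [MeasurableSpace Ω] (P : Measure Ω) [IsProbabilityMeasure P]
    (E E' : Ω → ℝ) (hE : HasDensity P E expPDF) (hE' : HasDensity P E' expPDF)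
    (hind : IndepFun E E' P)
    (t : ℝ) (ht0 : 0 ≤ t) (ht1 : t ≤ 1) :
    (∫ ω, |(E ω - 1) - t * (E' ω - 1)| ∂P) = (2 / Real.exp 1) * Real.exp t / (1 + t) := by
  set F : ℝ × ℝ → ℝ := fun p => |(p.1 - 1) - t * (p.2 - 1)|
  have hF : Integrable F (expLaw.prod expLaw) :=
    (((integrable_id_expLaw.comp_fst expLaw).sub (integrable_const 1)).sub
      (((integrable_id_expLaw.comp_snd expLaw).sub (integrable_const 1)).const_mul t)).abs
  calc ∫ ω, |(E ω - 1) - t * (E' ω - 1)| ∂P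
      = ∫ p, F p ∂(expLaw.prod expLaw) :=
        integral_comp_eq_integral_prod_of_indepFun (F := F) hE hE' hind (by fun_prop)
    _ = ∫ y, ∫ x, |x - (1 - t + t * y)| ∂expLaw ∂expLaw := by
        rw [integral_prod_symm F hF]
        refine integral_congr_ae (ae_of_all _ fun y => integral_congr_ae (ae_of_all _ fun x => ?_))
        simp only [F]
        ring_nf
    _ = ∫ y, (1 - t + t * y) - 1 + 2 * exp (-(1 - t + t * y)) ∂expLaw :=
        integral_congr_ae <| ae_pos_expLaw.mono fun y hy =>
          integral_abs_sub_expLaw (by nlinarith)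
    _ = 2 / exp 1 * exp t / (1 + t) := by
        rw [integral_affine_add_exp_expLaw (by linarith), exp_sub]
        ring
end

section
/- With ℰ_t = (ℰ−1) − t(ℰ'−1) for i.i.d. standard exponentials and μ_t = (2/e)e^t/(1+t), the function t ↦ E|ℰ_t/μ_t|⁴ is strictly decreasing on [0,1]; explicitly E|ℰ_t|⁴ = 9t⁴ + 6t² + 9, and d/dt(E|ℰ_t/μ_t|⁴) = −12·t(1−t)²(3t²+3t+2)/(μ_t⁴(1+t)). -/
open MeasureTheory ProbabilityTheory Real Set

/-!
Expanding `(X - tY)⁴` for the independent centred exponentials `X = ℰ - 1`, `Y = ℰ' - 1`, the odd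
moments `E X = E Y = 0` kill the mixed terms with an odd power, leaving
`E X⁴ + 6t² (E X²)(E Y²) + t⁴ E Y⁴ = 9 + 6t² + 9t⁴`; the moments `E (ℰ - 1)ᵏ` come from
`∫₀^∞ e^{-x} xᵐ dx = m!`. Since `1 / μ_t = (e/2)(1 + t)e^{-t}`, the normalised moment is the explicit
smooth function `(9t⁴ + 6t² + 9)((e/2)(1 + t)e^{-t})⁴`, whose derivative factors as stated and is
negative on `(0, 1)`.
-/

lemma integral_exp_neg_mul_pow (n : ℕ) :
    ∫ x in Ioi (0 : ℝ), exp (-x) * x ^ n = n.factorial := by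
  rw [← Real.Gamma_nat_eq_factorial, Real.Gamma_eq_integral (by positivity)]
  refine setIntegral_congr_fun measurableSet_Ioi fun x _ => ?_
  rw [add_sub_cancel_right, Real.rpow_natCast, mul_comm]

lemma integrableOn_exp_neg_mul_pow (n : ℕ) :
    IntegrableOn (fun x => exp (-x) * x ^ n) (Ioi (0 : ℝ)) := by
  refine (Real.GammaIntegral_convergent (show (0 : ℝ) < n + 1 by positivity)).congr_fun
    (fun x _ => ?_) measurableSet_Ioi
  simp only [add_sub_cancel_right, Real.rpow_natCast]

lemma exp_neg_mul_sub_one_pow (k : ℕ) (x : ℝ) : exp (-x) * (x - 1) ^ k =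
    ∑ m ∈ Finset.range (k + 1), (-1) ^ (m + k) * k.choose m * (exp (-x) * x ^ m) := by
  rw [sub_pow, Finset.mul_sum]
  exact Finset.sum_congr rfl fun m _ => by ring

lemma integrableOn_exp_neg_mul_sub_one_pow (k : ℕ) :
    IntegrableOn (fun x => exp (-x) * (x - 1) ^ k) (Ioi (0 : ℝ)) := by
  simp_rw [exp_neg_mul_sub_one_pow]
  exact integrable_finsetSum _ fun m _ => (integrableOn_exp_neg_mul_pow m).const_mul _

lemma integral_exp_neg_mul_sub_one_pow (k : ℕ) :
    ∫ x in Ioi (0 : ℝ), exp (-x) * (x - 1) ^ k =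
      ∑ m ∈ Finset.range (k + 1), (-1) ^ (m + k) * k.choose m * (m.factorial : ℝ) := by
  simp_rw [exp_neg_mul_sub_one_pow]
  rw [integral_finsetSum _ fun m _ => (integrableOn_exp_neg_mul_pow m).const_mul _]
  simp_rw [integral_const_mul, integral_exp_neg_mul_pow]

lemma expPDF_mul_eq_indicator (g : ℝ → ℝ) :
    (fun x => expPDF x * g x) = (Ioi 0).indicator fun x => exp (-x) * g x := by
  ext x
  by_cases hx : 0 < x <;> simp [expPDF, indicator, hx]

section HasDensityExpPDF

variable {Ω : Type*} [MeasurableSpace Ω] {P : Measure Ω} {X : Ω → ℝ}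

lemma integral_comp_of_hasDensity_expPDF (h : HasDensity P X expPDF) {g : ℝ → ℝ}
    (hg : Measurable g) : ∫ ω, g (X ω) ∂P = ∫ x in Ioi 0, exp (-x) * g x := by
  obtain ⟨hX, hmap⟩ := h
  rw [← integral_map hX.aemeasurable hg.aestronglyMeasurable, hmap,
    ← integral_indicator measurableSet_Ioi, ← expPDF_mul_eq_indicator]
  exact integral_withDensity_eq_integral_toReal_smul₀ measurable_expPDF.ennreal_ofReal.aemeasurable
    (ae_of_all _ fun _ => ENNReal.ofReal_lt_top) g |>.trans (by simp [expPDF_nonneg])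

lemma integrable_comp_of_hasDensity_expPDF (h : HasDensity P X expPDF) {g : ℝ → ℝ}
    (hg : Measurable g) (hi : IntegrableOn (fun x => exp (-x) * g x) (Ioi 0)) :
    Integrable (fun ω => g (X ω)) P := by
  obtain ⟨hX, hmap⟩ := h
  refine (integrable_map_measure hg.aestronglyMeasurable hX.aemeasurable).mp ?_
  rw [hmap, integrable_withDensity_iff measurable_expPDF.ennreal_ofReal
    (ae_of_all _ fun _ => ENNReal.ofReal_lt_top)]
  simp_rw [ENNReal.toReal_ofReal (expPDF_nonneg _), mul_comm (g _), expPDF_mul_eq_indicator]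
  exact (integrable_indicator_iff measurableSet_Ioi).mpr hi

lemma integrable_sub_one_pow_of_hasDensity_expPDF (h : HasDensity P X expPDF) (k : ℕ) :
    Integrable (fun ω => (X ω - 1) ^ k) P :=
  integrable_comp_of_hasDensity_expPDF h (g := fun x => (x - 1) ^ k) (by fun_prop)
    (integrableOn_exp_neg_mul_sub_one_pow k)

lemma integral_sub_one_pow_of_hasDensity_expPDF (h : HasDensity P X expPDF) (k : ℕ) :
    ∫ ω, (X ω - 1) ^ k ∂P =
      ∑ m ∈ Finset.range (k + 1), (-1) ^ (m + k) * k.choose m * (m.factorial : ℝ) := by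
  rw [integral_comp_of_hasDensity_expPDF h (g := fun x => (x - 1) ^ k) (by fun_prop),
    integral_exp_neg_mul_sub_one_pow]

end HasDensityExpPDF

open Finset in
lemma integral_add_pow_of_indepFun {Ω : Type*} [MeasurableSpace Ω] {P : Measure Ω}
    {X Y : Ω → ℝ} (hXY : IndepFun X Y P) (n : ℕ)
    (hX : ∀ k ≤ n, Integrable (fun ω => X ω ^ k) P) (hY : ∀ k ≤ n, Integrable (fun ω => Y ω ^ k) P) :
    ∫ ω, (X ω + Y ω) ^ n ∂P =
      ∑ k ∈ range (n + 1), (∫ ω, X ω ^ k ∂P) * (∫ ω, Y ω ^ (n - k) ∂P) * n.choose k := by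
  have hindep (k : ℕ) : IndepFun (fun ω => X ω ^ k) (fun ω => Y ω ^ (n - k)) P :=
    hXY.comp (measurable_id.pow_const k) (measurable_id.pow_const (n - k))
  simp_rw [add_pow]
  have hint : ∀ k ∈ range (n + 1), Integrable (fun ω => X ω ^ k * Y ω ^ (n - k) * n.choose k) P :=
    fun k hk =>
      ((hindep k).integrable_mul (hX k (mem_range_succ_iff.mp hk)) (hY _ (n.sub_le k))).mul_const _
  rw [integral_finsetSum _ hint]
  refine sum_congr rfl fun k hk => ?_
  rw [integral_mul_const]
  congr 1
  exact (hindep k).integral_mul_eq_mul_integral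
    (hX k (mem_range_succ_iff.mp hk)).aestronglyMeasurable (hY _ (n.sub_le k)).aestronglyMeasurable

theorem integral_sub_mul_sub_one_pow_four_of_hasDensity_expPDF {Ω : Type*} [MeasurableSpace Ω]
    {P : Measure Ω} [IsProbabilityMeasure P] {E E' : Ω → ℝ} (hE : HasDensity P E expPDF)
    (hE' : HasDensity P E' expPDF) (hind : IndepFun E E' P) (t : ℝ) :
    ∫ ω, ((E ω - 1) - t * (E' ω - 1)) ^ 4 ∂P = 9 * t ^ 4 + 6 * t ^ 2 + 9 := by
  have hsum := integral_add_pow_of_indepFun (X := fun ω => E ω - 1) (Y := fun ω => -t * (E' ω - 1))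
    (hind.comp (φ := fun x => x - 1) (ψ := fun x => -t * (x - 1)) (by fun_prop) (by fun_prop)) 4
    (fun k _ => integrable_sub_one_pow_of_hasDensity_expPDF hE k)
    (fun k _ => by simpa only [mul_pow] using
      (integrable_sub_one_pow_of_hasDensity_expPDF hE' k).const_mul ((-t) ^ k))
  have hsplit (ω : Ω) : (E ω - 1) - t * (E' ω - 1) = (E ω - 1) + -t * (E' ω - 1) := by ring
  simp only [hsplit, hsum, mul_pow, integral_const_mul,
    integral_sub_one_pow_of_hasDensity_expPDF hE, integral_sub_one_pow_of_hasDensity_expPDF hE']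
  norm_num [Finset.sum_range_succ, Nat.choose, Nat.factorial]
  ring

/-- `(μ t)⁻¹` for `μ t = (2 / e) eᵗ / (1 + t)`, written without division so that it is smooth on all
of `ℝ` (at `t = -1` both sides are `0`, as `0⁻¹ = 0`). -/
noncomputable def invNormalizer (t : ℝ) : ℝ := exp 1 / 2 * (1 + t) * exp (-t)

lemma inv_eq_invNormalizer {μ : ℝ → ℝ} (hμ : ∀ t, μ t = (2 / exp 1) * exp t / (1 + t)) (t : ℝ) :
    (μ t)⁻¹ = invNormalizer t := by
  rw [hμ, invNormalizer, exp_neg]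
  simp only [div_eq_mul_inv, mul_inv, inv_inv]
  ring

lemma hasDerivAt_invNormalizer (t : ℝ) :
    HasDerivAt invNormalizer (-(exp 1 / 2) * t * exp (-t)) t := by
  refine ((((hasDerivAt_id t).const_add 1).const_mul (exp 1 / 2)).mul
    (hasDerivAt_neg t).exp).congr_deriv ?_
  simp only [id]
  ring

/-- `E ((ℰ - 1) - t (ℰ' - 1))⁴ / μ_t⁴`, in closed form. -/
noncomputable def normalizedFourthMoment (t : ℝ) : ℝ :=
  (9 * t ^ 4 + 6 * t ^ 2 + 9) * invNormalizer t ^ 4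

lemma hasDerivAt_normalizedFourthMoment (t : ℝ) :
    HasDerivAt normalizedFourthMoment
      (-12 * t * (1 - t) ^ 2 * (3 * t ^ 2 + 3 * t + 2) * invNormalizer t ^ 3 *
        (exp 1 / 2 * exp (-t))) t := by
  have hp : HasDerivAt (fun s : ℝ => 9 * s ^ 4 + 6 * s ^ 2 + 9) (36 * t ^ 3 + 12 * t) t := by
    refine ((((hasDerivAt_pow 4 t).const_mul 9).add
      ((hasDerivAt_pow 2 t).const_mul 6)).add_const 9).congr_deriv ?_
    norm_num
    ring
  refine (hp.mul ((hasDerivAt_invNormalizer t).pow 4)).congr_deriv ?_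
  simp only [Pi.pow_apply, invNormalizer]
  ring

lemma strictAntiOn_normalizedFourthMoment : StrictAntiOn normalizedFourthMoment (Icc 0 1) := by
  refine strictAntiOn_of_hasDerivWithinAt_neg (convex_Icc 0 1)
    (fun t _ => (hasDerivAt_normalizedFourthMoment t).continuousAt.continuousWithinAt)
    (fun t _ => (hasDerivAt_normalizedFourthMoment t).hasDerivWithinAt) fun t ht => ?_
  rw [interior_Icc, mem_Ioo] at ht
  obtain ⟨ht₀, ht₁⟩ := ht
  have hν : 0 < invNormalizer t := by
    have : 0 < 1 + t := by linarith
    unfold invNormalizer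
    positivity
  have hq : 0 < 3 * t ^ 2 + 3 * t + 2 := by nlinarith
  have := mul_pos (mul_pos (mul_pos (mul_pos ht₀ (pow_pos (sub_pos.mpr ht₁) 2)) hq) (pow_pos hν 3))
    (by positivity : 0 < exp 1 / 2 * exp (-t))
  linarith

theorem stmt_12 {Ω : Type} [MeasurableSpace Ω] (P : Measure Ω) [IsProbabilityMeasure P]
    (E E' : Ω → ℝ) (hE : HasDensity P E expPDF) (hE' : HasDensity P E' expPDF)
    (hind : IndepFun E E' P)
    (μ : ℝ → ℝ) (hμ : ∀ t, μ t = (2 / Real.exp 1) * Real.exp t / (1 + t)) :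
    StrictAntiOn
      (fun t => ∫ ω, (((E ω - 1) - t * (E' ω - 1)) / μ t) ^ 4 ∂P) (Set.Icc 0 1) ∧
    (∀ t ∈ Set.Icc (0 : ℝ) 1,
      (∫ ω, ((E ω - 1) - t * (E' ω - 1)) ^ 4 ∂P) = 9 * t ^ 4 + 6 * t ^ 2 + 9) ∧
    (∀ t ∈ Set.Icc (0 : ℝ) 1,
      HasDerivAt (fun s => ∫ ω, (((E ω - 1) - s * (E' ω - 1)) / μ s) ^ 4 ∂P)
        (-12 * (t * (1 - t) ^ 2 / (μ t ^ 4 * (1 + t))) * (3 * t ^ 2 + 3 * t + 2)) t) := by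
  have hmoment := integral_sub_mul_sub_one_pow_four_of_hasDensity_expPDF hE hE' hind
  have hnormalized : (fun t => ∫ ω, (((E ω - 1) - t * (E' ω - 1)) / μ t) ^ 4 ∂P) =
      normalizedFourthMoment := by
    funext t
    simp only [div_eq_mul_inv, mul_pow, integral_mul_const, hmoment, inv_eq_invNormalizer hμ]
    rfl
  refine ⟨hnormalized ▸ strictAntiOn_normalizedFourthMoment, fun t _ => hmoment t, fun t ht => ?_⟩
  rw [hnormalized]
  convert hasDerivAt_normalizedFourthMoment t using 1
  have h1t : 1 + t ≠ 0 := by linarith [ht.1]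
  rw [← inv_inv (μ t), inv_eq_invNormalizer hμ, invNormalizer]
  field_simp
end

section
/- The function h(t) = 2t² + 2t + 1 − t⁴ − 4e^{t-1} on [0,1] is first negative then positive, with exactly one zero in (0,1). -/
/-! With `h = hFun`, the derivative `g = h' = hFunDeriv` has `g' (t) = 4 - 12 t² - 4 e^{t-1}`
decreasing on `[0, 1]`, so `g` is concave there; since `g 0 = 2 - 4/e > 0` and `g 1 = -2`, `g`
vanishes at some `m ∈ (0, 1)`, and concavity makes it positive before `m` and negative after. Hence
`h` increases strictly on `[0, m]` and decreases strictly on `[m, 1]`. As `h 1 = 0`, this forces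
`h m > 0`, and since `h 0 = 1 - 4/e < 0`, `h` has exactly one zero in `(0, 1)`, which lies in
`(0, m)`. -/

open Real Set

section SignChange

variable {E : Type*} [AddCommGroup E] [Module ℝ E] {s : Set E} {f : E → ℝ} {a m t : E}

theorem ConcaveOn.pos_of_mem_openSegment (hf : ConcaveOn ℝ s f) (ha : a ∈ s) (hm : m ∈ s)
    (hfa : 0 < f a) (hfm : 0 ≤ f m) (ht : t ∈ openSegment ℝ a m) : 0 < f t := by
  obtain ⟨α, β, hα, hβ, hαβ, rfl⟩ := ht
  calc 0 < α * f a + β * f m := by positivity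
    _ ≤ f (α • a + β • m) := hf.2 ha hm hα.le hβ.le hαβ

theorem ConcaveOn.neg_of_nonpos_of_mem_openSegment (hf : ConcaveOn ℝ s f) (ha : a ∈ s)
    (ht : t ∈ s) (hfa : 0 < f a) (hfm : f m ≤ 0) (hm : m ∈ openSegment ℝ a t) : f t < 0 := by
  obtain ⟨α, β, hα, hβ, hαβ, rfl⟩ := hm
  have hconc : α * f a + β * f t ≤ f (α • a + β • t) := hf.2 ha ht hα.le hβ.le hαβ
  nlinarith [mul_pos hα hfa]

theorem exists_sign_change_of_strictMonoOn_of_strictAntiOn {f : ℝ → ℝ} {a m b : ℝ}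
    (hcont : ContinuousOn f (Icc a m)) (hmono : StrictMonoOn f (Icc a m))
    (hanti : StrictAntiOn f (Icc m b)) (ham : a ≤ m) (hmb : m < b) (hfa : f a < 0)
    (hfb : 0 ≤ f b) :
    ∃ z ∈ Ioo a b, (∀ t ∈ Ioo a b, t < z → f t < 0) ∧ (∀ t ∈ Ioo a b, z < t → 0 < f t) ∧
      f z = 0 := by
  have hfm : 0 < f m :=
    hfb.trans_lt (hanti (left_mem_Icc.2 hmb.le) (right_mem_Icc.2 hmb.le) hmb)
  obtain ⟨z, hz, hfz⟩ := intermediate_value_Ioo ham hcont ⟨hfa, hfm⟩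
  have hzIcc : z ∈ Icc a m := Ioo_subset_Icc_self hz
  refine ⟨z, ⟨hz.1, hz.2.trans hmb⟩, fun t ht htz => ?_, fun t ht hzt => ?_, hfz⟩
  · exact hfz ▸ hmono ⟨ht.1.le, (htz.trans hz.2).le⟩ hzIcc htz
  · rcases le_or_gt t m with htm | hmt
    · exact hfz ▸ hmono hzIcc ⟨(hz.1.trans hzt).le, htm⟩ hzt
    · exact hfb.trans_lt (hanti ⟨hmt.le, ht.2.le⟩ (right_mem_Icc.2 hmb.le) ht.2)

end SignChange

noncomputable def hFun (t : ℝ) : ℝ := 2 * t ^ 2 + 2 * t + 1 - t ^ 4 - 4 * exp (t - 1)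

noncomputable def hFunDeriv (t : ℝ) : ℝ := 4 * t + 2 - 4 * t ^ 3 - 4 * exp (t - 1)

theorem hasDerivAt_exp_sub_one (t : ℝ) : HasDerivAt (fun t => exp (t - 1)) (exp (t - 1)) t := by
  simpa using ((hasDerivAt_id t).sub_const 1).exp

theorem hasDerivAt_hFun (t : ℝ) : HasDerivAt hFun (hFunDeriv t) t := by
  have hd := (((((hasDerivAt_pow 2 t).const_mul 2).add ((hasDerivAt_id' t).const_mul 2)).add_const
    1).sub (hasDerivAt_pow 4 t)).sub ((hasDerivAt_exp_sub_one t).const_mul 4)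
  refine hd.congr_deriv ?_
  norm_num [hFunDeriv]
  ring

theorem hasDerivAt_hFunDeriv (t : ℝ) :
    HasDerivAt hFunDeriv (4 - 12 * t ^ 2 - 4 * exp (t - 1)) t := by
  have hd := ((((hasDerivAt_id' t).const_mul 4).add_const 2).sub
    ((hasDerivAt_pow 3 t).const_mul 4)).sub ((hasDerivAt_exp_sub_one t).const_mul 4)
  refine hd.congr_deriv ?_
  ring

theorem continuous_hFun : Continuous hFun :=
  continuous_iff_continuousAt.2 fun t => (hasDerivAt_hFun t).continuousAt

theorem continuous_hFunDeriv : Continuous hFunDeriv :=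
  continuous_iff_continuousAt.2 fun t => (hasDerivAt_hFunDeriv t).continuousAt

theorem hFun_zero_neg : hFun 0 < 0 := by
  have : (0.36787944116 : ℝ) < exp (-1) := exp_neg_one_gt_d9
  norm_num [hFun]
  linarith

theorem hFun_one : hFun 1 = 0 := by norm_num [hFun]

theorem hFunDeriv_zero_pos : 0 < hFunDeriv 0 := by
  have : exp (-1) < 1 / 2 := exp_neg_one_lt_half
  norm_num [hFunDeriv]
  linarith

theorem hFunDeriv_one : hFunDeriv 1 = -2 := by norm_num [hFunDeriv]

theorem concaveOn_hFunDeriv : ConcaveOn ℝ (Icc 0 1) hFunDeriv := by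
  refine AntitoneOn.concaveOn_of_deriv (convex_Icc 0 1) continuous_hFunDeriv.continuousOn
    (fun t _ => (hasDerivAt_hFunDeriv t).differentiableAt.differentiableWithinAt) ?_
  intro x hx y hy hxy
  rw [interior_Icc] at hx hy
  rw [(hasDerivAt_hFunDeriv x).deriv, (hasDerivAt_hFunDeriv y).deriv]
  have hexp : exp (x - 1) ≤ exp (y - 1) := exp_le_exp.2 (by linarith)
  nlinarith [mul_le_mul hxy hxy hx.1.le hy.1.le]

theorem exists_mem_Ioo_hFunDeriv_eq_zero : ∃ m ∈ Ioo (0 : ℝ) 1, hFunDeriv m = 0 :=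
  intermediate_value_Ioo' zero_le_one continuous_hFunDeriv.continuousOn
    ⟨hFunDeriv_one ▸ by norm_num, hFunDeriv_zero_pos⟩

theorem strictMonoOn_hFun {m : ℝ} (hm : m ∈ Ioo (0 : ℝ) 1) (hgm : hFunDeriv m = 0) :
    StrictMonoOn hFun (Icc 0 m) := by
  refine strictMonoOn_of_deriv_pos (convex_Icc 0 m) continuous_hFun.continuousOn fun t ht => ?_
  rw [interior_Icc] at ht
  rw [(hasDerivAt_hFun t).deriv]
  exact concaveOn_hFunDeriv.pos_of_mem_openSegment (left_mem_Icc.2 zero_le_one)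
    (Ioo_subset_Icc_self hm) hFunDeriv_zero_pos hgm.ge (openSegment_eq_Ioo (ht.1.trans ht.2) ▸ ht)

theorem strictAntiOn_hFun {m : ℝ} (hm : m ∈ Ioo (0 : ℝ) 1) (hgm : hFunDeriv m = 0) :
    StrictAntiOn hFun (Icc m 1) := by
  refine strictAntiOn_of_deriv_neg (convex_Icc m 1) continuous_hFun.continuousOn fun t ht => ?_
  rw [interior_Icc] at ht
  rw [(hasDerivAt_hFun t).deriv]
  exact concaveOn_hFunDeriv.neg_of_nonpos_of_mem_openSegment (left_mem_Icc.2 zero_le_one)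
    ⟨(hm.1.trans ht.1).le, ht.2.le⟩ hFunDeriv_zero_pos hgm.le
    (openSegment_eq_Ioo (hm.1.trans ht.1) ▸ ⟨hm.1, ht.1⟩)

theorem stmt_14 :
    ∃ z ∈ Set.Ioo (0 : ℝ) 1,
      (∀ t ∈ Set.Ioo (0 : ℝ) 1, t < z →
        2 * t ^ 2 + 2 * t + 1 - t ^ 4 - 4 * Real.exp (t - 1) < 0) ∧
      (∀ t ∈ Set.Ioo (0 : ℝ) 1, z < t →
        0 < 2 * t ^ 2 + 2 * t + 1 - t ^ 4 - 4 * Real.exp (t - 1)) ∧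
      2 * z ^ 2 + 2 * z + 1 - z ^ 4 - 4 * Real.exp (z - 1) = 0 ∧
      ∀ t ∈ Set.Ioo (0 : ℝ) 1,
        2 * t ^ 2 + 2 * t + 1 - t ^ 4 - 4 * Real.exp (t - 1) = 0 → t = z := by
  obtain ⟨m, hm, hgm⟩ := exists_mem_Ioo_hFunDeriv_eq_zero
  obtain ⟨z, hz, hneg, hpos, hzero⟩ := exists_sign_change_of_strictMonoOn_of_strictAntiOn
    continuous_hFun.continuousOn (strictMonoOn_hFun hm hgm)
    (strictAntiOn_hFun hm hgm) hm.1.le hm.2 hFun_zero_neg hFun_one.ge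
  refine ⟨z, hz, hneg, hpos, hzero, fun t ht hft => ?_⟩
  rcases lt_trichotomy t z with htz | rfl | hzt
  · exact absurd hft (hneg t ht htz).ne
  · rfl
  · exact absurd hft (hpos t ht hzt).ne'
end

section
/- Given q > 2 and p ∈ (-1,∞) such that 0, 1, p, q are pairwise distinct, and given 0 < x₁ < x₂ < x₃, there exist unique α, β, γ ∈ ℝ such that g(x) = x^p − (α + βx + γx^q) vanishes exactly at x₁, x₂, x₃ on (0,∞); moreover g has sign pattern (+,−,+,−) on the successive intervals (0,x₁),(x₁,x₂),(x₂,x₃),(x₃,∞) if p ∈ (-1,0) ∪ (1,q), and sign pattern (−,+,−,+) if p ∈ (0,1) ∪ (q,∞). -/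
/-!
A generalized polynomial `∑ cᵢ x^{rᵢ}` with `n` distinct real exponents that vanishes at `n`
distinct positive points is zero: dividing by `x^{r₀}` makes the first term constant, and by
Rolle the derivative, a generalized polynomial with `n - 1` terms, vanishes at `n - 1` points.
Hence interpolation of `x^p` by `1, x, x^q` at `x₁, x₂, x₃` is uniquely solvable, the error
`g = x^p - (α + βx + γx^q)`, having four exponents, vanishes only at `x₁, x₂, x₃`, and
`g' = p x^{p-1} - β - γ q x^{q-1}` vanishes only at its two Rolle zeros `s₁ ∈ (x₁, x₂)`,
`s₂ ∈ (x₂, x₃)`. So the zeros of `g` are simple, `g` changes sign at each of them, and the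
overall sign is read off from the dominant term: `x^p` at `0⁺` if `p < 0` and at `∞` if `p > q`;
`p x^{p-1}` in `g'` at `0⁺` if `0 < p < 1`; `-γ x^q` at `∞` if `1 < p < q`, where `γ > 0`
because `g''` vanishes between `s₁` and `s₂`.
-/

open Real Set Filter Topology Function

lemma injective_vec3 {α : Type*} {a b c : α} (hab : a ≠ b) (hac : a ≠ c) (hbc : b ≠ c) :
    Injective ![a, b, c] := by
  intro i j h; fin_cases i <;> fin_cases j <;> simp_all [eq_comm]

lemma injective_vec4 {α : Type*} {a b c d : α} (hab : a ≠ b) (hac : a ≠ c) (had : a ≠ d)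
    (hbc : b ≠ c) (hbd : b ≠ d) (hcd : c ≠ d) : Injective ![a, b, c, d] := by
  intro i j h; fin_cases i <;> fin_cases j <;> simp_all [eq_comm]

lemma exists_hasDerivAt_eq_zero_of_pos {F F' : ℝ → ℝ} (hF : ∀ x, 0 < x → HasDerivAt F (F' x) x)
    {u v : ℝ} (hu : 0 < u) (huv : u < v) (h : F u = F v) : ∃ s ∈ Ioo u v, F' s = 0 :=
  exists_hasDerivAt_eq_zero huv
    (fun x hx => (hF x (hu.trans_le hx.1)).continuousAt.continuousWithinAt) h
    fun x hx => hF x (hu.trans hx.1)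

noncomputable def genPoly {n : ℕ} (c r : Fin n → ℝ) (x : ℝ) : ℝ := ∑ i, c i * x ^ r i

section GenPoly

variable {n : ℕ}

lemma hasDerivAt_genPoly (c r : Fin n → ℝ) {x : ℝ} (hx : 0 < x) :
    HasDerivAt (genPoly c r) (genPoly (fun i => c i * r i) (fun i => r i - 1) x) x := by
  have : HasDerivAt (fun y => ∑ i, c i * y ^ r i) (∑ i, c i * (r i * x ^ (r i - 1))) x :=
    HasDerivAt.fun_sum fun i _ => (hasDerivAt_rpow_const (Or.inl hx.ne')).const_mul (c i)
  unfold genPoly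
  simpa only [mul_assoc] using this

lemma genPoly_sub_exponents (c r : Fin n → ℝ) (t : ℝ) {x : ℝ} (hx : 0 < x) :
    genPoly c (fun i => r i - t) x = x ^ (-t) * genPoly c r x := by
  simp only [genPoly, Finset.mul_sum, rpow_sub hx, rpow_neg hx.le]
  exact Finset.sum_congr rfl fun i _ => by ring

theorem genPoly_coeff_eq_zero_of_strictMono : ∀ {n : ℕ} {c r : Fin n → ℝ}, Injective r →
    ∀ {z : Fin n → ℝ}, StrictMono z → (∀ i, 0 < z i) → (∀ i, genPoly c r (z i) = 0) → c = 0
  | 0, _, _, _, _, _, _, _ => Subsingleton.elim _ _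
  | n + 1, c, r, hr, z, hz, hz0, h => by
    set s : Fin (n + 1) → ℝ := fun i => r i - r 0
    have hs : ∀ i, genPoly c s (z i) = 0 := fun i => by
      rw [genPoly_sub_exponents c r _ (hz0 i), h i, mul_zero]
    have hrolle : ∀ i : Fin n, ∃ w ∈ Ioo (z i.castSucc) (z i.succ),
        genPoly (fun j => c j * s j) (fun j => s j - 1) w = 0 := fun i =>
      exists_hasDerivAt_eq_zero_of_pos (fun x hx => hasDerivAt_genPoly c s hx) (hz0 _)
        (hz i.castSucc_lt_succ) ((hs _).trans (hs _).symm)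
    choose w hw hw0 using hrolle
    have hsucc : (fun i : Fin n => c i.succ * s i.succ) = 0 := by
      refine genPoly_coeff_eq_zero_of_strictMono (r := fun i => s i.succ - 1) ?_
        (z := w) ?_ (fun i => (hz0 _).trans (hw i).1) fun i => ?_
      · exact fun i j hij => Fin.succ_injective _ (hr (by simpa [s] using hij))
      · exact fun i j hij => (hw i).2.trans
          ((hz.monotone (Fin.succ_le_castSucc_iff.2 hij)).trans_lt (hw j).1)
      · simpa [genPoly, Fin.sum_univ_succ, s] using hw0 i
    have hc : ∀ i : Fin n, c i.succ = 0 := fun i =>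
      (mul_eq_zero.1 (congr_fun hsucc i)).resolve_right
        (sub_ne_zero.2 (hr.ne (Fin.succ_ne_zero i)))
    have hc0 : c 0 = 0 := by
      have := h 0
      simp only [genPoly, Fin.sum_univ_succ, hc, zero_mul, Finset.sum_const_zero, add_zero] at this
      exact (mul_eq_zero.1 this).resolve_right (rpow_pos_of_pos (hz0 0) _).ne'
    funext i
    cases i using Fin.cases with
    | zero => exact hc0
    | succ i => exact hc i

theorem genPoly_coeff_eq_zero {c r : Fin n → ℝ} (hr : Injective r) {z : Fin n → ℝ}
    (hz : Injective z) (hz0 : ∀ i, 0 < z i) (h : ∀ i, genPoly c r (z i) = 0) : c = 0 :=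
  genPoly_coeff_eq_zero_of_strictMono hr
    ((Tuple.monotone_sort z).strictMono_of_injective (hz.comp (Equiv.injective _)))
    (fun _ => hz0 _) fun _ => h _

theorem exists_genPoly_eq {r : Fin n → ℝ} (hr : Injective r) {z : Fin n → ℝ}
    (hz : Injective z) (hz0 : ∀ i, 0 < z i) (y : Fin n → ℝ) :
    ∃ c, ∀ i, genPoly c r (z i) = y i := by
  let M : Matrix (Fin n) (Fin n) ℝ := Matrix.of fun i j => z i ^ r j
  have hM : ∀ c i, M.mulVec c i = genPoly c r (z i) := fun c i => by
    simp only [Matrix.mulVec, dotProduct, genPoly, M, Matrix.of_apply, mul_comm]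
  have hinj : Injective M.mulVecLin :=
    (injective_iff_map_eq_zero _).2 fun c hc =>
      genPoly_coeff_eq_zero hr hz hz0 fun i => (hM c i).symm.trans (congr_fun hc i)
  obtain ⟨c, hc⟩ := LinearMap.injective_iff_surjective.1 hinj y
  exact ⟨c, fun i => (hM c i).symm.trans (congr_fun hc i)⟩

theorem tendsto_genPoly_atTop {c r : Fin n → ℝ} {i₀ : Fin n} (hr₀ : 0 < r i₀) (hc₀ : 0 < c i₀)
    (hr : ∀ i ≠ i₀, r i < r i₀) : Tendsto (genPoly c r) atTop atTop := by
  have hterm : ∀ i, Tendsto (fun x : ℝ => c i * x ^ (r i - r i₀)) atTop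
      (𝓝 (if i = i₀ then c i₀ else 0)) := fun i => by
    split_ifs with h
    · subst h; simp
    · simpa using (tendsto_rpow_neg_atTop (sub_pos.2 (hr i h))).const_mul (c i)
  have hsum := tendsto_finsetSum Finset.univ fun i _ => hterm i
  rw [Finset.sum_ite_eq' Finset.univ, if_pos (Finset.mem_univ _)] at hsum
  refine ((tendsto_rpow_atTop hr₀).atTop_mul_pos hc₀ hsum).congr' ?_
  filter_upwards [eventually_gt_atTop 0] with x hx
  rw [genPoly, Finset.mul_sum]
  refine Finset.sum_congr rfl fun i _ => ?_
  rw [rpow_sub hx]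
  field_simp

theorem tendsto_genPoly_nhdsGT_zero {c r : Fin n → ℝ} {i₀ : Fin n} (hr₀ : r i₀ < 0)
    (hc₀ : 0 < c i₀) (hr : ∀ i ≠ i₀, r i₀ < r i) : Tendsto (genPoly c r) (𝓝[>] 0) atTop := by
  have := tendsto_genPoly_atTop (r := -r) (neg_pos.2 hr₀) hc₀ fun i hi => neg_lt_neg (hr i hi)
  refine (this.comp tendsto_inv_nhdsGT_zero).congr' ?_
  filter_upwards [self_mem_nhdsWithin] with x (hx : 0 < x)
  simp [genPoly, inv_rpow hx.le, rpow_neg hx.le]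

end GenPoly

def AltSigns (F : ℝ → ℝ) (x₁ x₂ x₃ : ℝ) : Prop :=
  (∀ x ∈ Ioo 0 x₁, 0 < F x) ∧ (∀ x ∈ Ioo x₁ x₂, F x < 0) ∧
    (∀ x ∈ Ioo x₂ x₃, 0 < F x) ∧ ∀ x ∈ Ioi x₃, F x < 0

lemma altSigns_neg_iff {F : ℝ → ℝ} {x₁ x₂ x₃ : ℝ} :
    AltSigns (-F) x₁ x₂ x₃ ↔ (∀ x ∈ Ioo 0 x₁, F x < 0) ∧ (∀ x ∈ Ioo x₁ x₂, 0 < F x) ∧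
      (∀ x ∈ Ioo x₂ x₃, F x < 0) ∧ ∀ x ∈ Ioi x₃, 0 < F x := by
  simp only [AltSigns, Pi.neg_apply, neg_pos, neg_lt_zero]

lemma IsPreconnected.pos_or_neg_of_ne_zero {F : ℝ → ℝ} {s : Set ℝ} (hs : IsPreconnected s)
    (hF : ContinuousOn F s) (hne : ∀ x ∈ s, F x ≠ 0) :
    (∀ x ∈ s, 0 < F x) ∨ ∀ x ∈ s, F x < 0 := by
  by_contra! h
  obtain ⟨⟨x, hx, hFx⟩, y, hy, hFy⟩ := h
  obtain ⟨z, hz, hFz⟩ := hs.intermediate_value hx hy hF ⟨hFx, hFy⟩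
  exact hne z hz hFz

lemma HasDerivAt.eq_zero_of_pos_of_pos {F : ℝ → ℝ} {d l z r : ℝ} (hd : HasDerivAt F d z)
    (hz : F z = 0) (hlz : l < z) (hzr : z < r) (hl : ∀ x ∈ Ioo l z, 0 < F x)
    (hr : ∀ x ∈ Ioo z r, 0 < F x) : d = 0 := by
  refine IsLocalMin.hasDerivAt_eq_zero ?_ hd
  filter_upwards [Ioo_mem_nhds hlz hzr] with x hx
  rcases lt_trichotomy x z with h | rfl | h
  · exact hz ▸ (hl x ⟨hx.1, h⟩).le
  · exact le_rfl
  · exact hz ▸ (hr x ⟨h, hx.2⟩).le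

lemma HasDerivAt.eq_zero_of_neg_of_neg {F : ℝ → ℝ} {d l z r : ℝ} (hd : HasDerivAt F d z)
    (hz : F z = 0) (hlz : l < z) (hzr : z < r) (hl : ∀ x ∈ Ioo l z, F x < 0)
    (hr : ∀ x ∈ Ioo z r, F x < 0) : d = 0 :=
  neg_eq_zero.1 <| hd.neg.eq_zero_of_pos_of_pos (by simp [hz]) hlz hzr
    (fun x hx => neg_pos.2 (hl x hx)) fun x hx => neg_pos.2 (hr x hx)

section SignPattern

variable {F F' : ℝ → ℝ} {x₁ x₂ x₃ : ℝ}

theorem altSigns_of_pos (h1 : 0 < x₁) (h12 : x₁ < x₂) (h23 : x₂ < x₃)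
    (hF : ∀ x, 0 < x → HasDerivAt F (F' x) x)
    (hzero : ∀ x, 0 < x → (F x = 0 ↔ x = x₁ ∨ x = x₂ ∨ x = x₃))
    (hsimple : ∀ x, 0 < x → F x = 0 → F' x ≠ 0) {t : ℝ} (ht : t ∈ Ioo 0 x₁)
    (hFt : 0 < F t) : AltSigns F x₁ x₂ x₃ := by
  have h2 : 0 < x₂ := h1.trans h12
  have h3 : 0 < x₃ := h2.trans h23
  have e₁ : F x₁ = 0 := (hzero x₁ h1).2 (by simp)
  have e₂ : F x₂ = 0 := (hzero x₂ h2).2 (by simp)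
  have e₃ : F x₃ = 0 := (hzero x₃ h3).2 (by simp)
  have hsign : ∀ s ⊆ Ioi 0, IsPreconnected s → x₁ ∉ s → x₂ ∉ s → x₃ ∉ s →
      (∀ x ∈ s, 0 < F x) ∨ ∀ x ∈ s, F x < 0 := by
    intro s hs hsc n₁ n₂ n₃
    refine hsc.pos_or_neg_of_ne_zero
      (fun x hx => (hF x (hs hx)).continuousAt.continuousWithinAt) fun x hx hFx => ?_
    rcases (hzero x (hs hx)).1 hFx with rfl | rfl | rfl <;> contradiction
  have I₀ : ∀ x ∈ Ioo 0 x₁, 0 < F x :=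
    (hsign _ (fun x hx => hx.1) isPreconnected_Ioo right_notMem_Ioo (notMem_Ioo_of_ge h12.le)
      (notMem_Ioo_of_ge (h12.trans h23).le)).resolve_right fun h => (h t ht).not_gt hFt
  have I₁ : ∀ x ∈ Ioo x₁ x₂, F x < 0 :=
    (hsign _ (fun x hx => h1.trans hx.1) isPreconnected_Ioo left_notMem_Ioo right_notMem_Ioo
      (notMem_Ioo_of_ge h23.le)).resolve_left fun h =>
        hsimple x₁ h1 e₁ ((hF x₁ h1).eq_zero_of_pos_of_pos e₁ h1 h12 I₀ h)
  have I₂ : ∀ x ∈ Ioo x₂ x₃, 0 < F x :=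
    (hsign _ (fun x hx => h2.trans hx.1) isPreconnected_Ioo (notMem_Ioo_of_le h12.le)
      left_notMem_Ioo right_notMem_Ioo).resolve_right fun h =>
        hsimple x₂ h2 e₂ ((hF x₂ h2).eq_zero_of_neg_of_neg e₂ h12 h23 I₁ h)
  have I₃ : ∀ x ∈ Ioi x₃, F x < 0 :=
    (hsign _ (fun x hx => h3.trans hx) isPreconnected_Ioi (notMem_Ioi.2 (h12.trans h23).le)
      (notMem_Ioi.2 h23.le) self_notMem_Ioi).resolve_left fun h =>
        hsimple x₃ h3 e₃ ((hF x₃ h3).eq_zero_of_pos_of_pos e₃ h23 (lt_add_one x₃) I₂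
          fun x hx => h x hx.1)
  exact ⟨I₀, I₁, I₂, I₃⟩

theorem altSigns_or_altSigns_neg (h1 : 0 < x₁) (h12 : x₁ < x₂) (h23 : x₂ < x₃)
    (hF : ∀ x, 0 < x → HasDerivAt F (F' x) x)
    (hzero : ∀ x, 0 < x → (F x = 0 ↔ x = x₁ ∨ x = x₂ ∨ x = x₃))
    (hsimple : ∀ x, 0 < x → F x = 0 → F' x ≠ 0) :
    AltSigns F x₁ x₂ x₃ ∨ AltSigns (-F) x₁ x₂ x₃ := by
  have hmid : x₁ / 2 ∈ Ioo 0 x₁ := ⟨half_pos h1, half_lt_self h1⟩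
  have hne : F (x₁ / 2) ≠ 0 := fun h => by
    rcases (hzero _ hmid.1).1 h with h' | h' | h' <;> linarith [hmid.2]
  rcases hne.lt_or_gt with hneg | hpos
  · refine .inr (altSigns_of_pos h1 h12 h23 (fun x hx => (hF x hx).neg) (fun x hx => ?_)
      (fun x hx hFx => neg_ne_zero.2 (hsimple x hx (neg_eq_zero.1 hFx))) hmid (neg_pos.2 hneg))
    rw [Pi.neg_apply, neg_eq_zero, hzero x hx]
  · exact .inl (altSigns_of_pos h1 h12 h23 hF hzero hsimple hmid hpos)

end SignPattern

lemma neg_of_tendsto_deriv_atTop {F F' : ℝ → ℝ} {x₁ : ℝ}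
    (hF : ∀ x ∈ Ioc 0 x₁, HasDerivAt F (F' x) x) (hF' : Tendsto F' (𝓝[>] 0) atTop)
    (hne : ∀ x ∈ Ioc 0 x₁, F' x ≠ 0) (hx₁ : F x₁ = 0) : ∀ x ∈ Ioo 0 x₁, F x < 0 := by
  intro x hx
  have h1 : 0 < x₁ := hx.1.trans hx.2
  obtain ⟨t, hF't, ht⟩ := ((hF'.eventually_gt_atTop 0).and (Ioc_mem_nhdsGT h1)).exists
  have hpos : ∀ y ∈ Ioc 0 x₁, 0 < F' y :=
    (hasDerivWithinAt_forall_lt_or_forall_gt_of_forall_ne (convex_Ioc 0 x₁)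
      (fun y hy => (hF y hy).hasDerivWithinAt) hne).resolve_left fun h => (h t ht).not_gt hF't
  have hmono : StrictMonoOn F (Ioc 0 x₁) := by
    refine strictMonoOn_of_deriv_pos (convex_Ioc 0 x₁)
      (fun y hy => (hF y hy).continuousAt.continuousWithinAt) fun y hy => ?_
    rw [interior_Ioc] at hy
    rw [(hF y (Ioo_subset_Ioc_self hy)).deriv]
    exact hpos y (Ioo_subset_Ioc_self hy)
  exact hx₁ ▸ hmono (Ioo_subset_Ioc_self hx) (right_mem_Ioc.2 h1) hx.2

noncomputable def interpError (p q a b c : ℝ) (x : ℝ) : ℝ := x ^ p - (a + b * x + c * x ^ q)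

noncomputable def interpErrorDeriv (p q b c : ℝ) : ℝ → ℝ :=
  genPoly ![p, -b, -(c * q)] ![p - 1, 0, q - 1]

section InterpError

variable {p q a b c x₁ x₂ x₃ : ℝ}

lemma interpError_eq_genPoly (p q a b c : ℝ) :
    interpError p q a b c = genPoly ![1, -a, -b, -c] ![p, 0, 1, q] := by
  funext x
  simp [interpError, genPoly, Fin.sum_univ_four]
  ring

lemma hasDerivAt_interpError {x : ℝ} (hx : 0 < x) :
    HasDerivAt (interpError p q a b c) (interpErrorDeriv p q b c x) x := by
  rw [interpError_eq_genPoly]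
  convert hasDerivAt_genPoly _ _ hx using 1
  simp [interpErrorDeriv, genPoly, Fin.sum_univ_four, Fin.sum_univ_three]

lemma injective_interpError_exponents (hq : 1 < q) (hp0 : p ≠ 0) (hp1 : p ≠ 1) (hpq : p ≠ q) :
    Injective ![p, 0, 1, q] :=
  injective_vec4 hp0 hp1 hpq zero_ne_one (by linarith) (by linarith)

theorem interpError_eq_zero_iff (hq : 1 < q) (hp0 : p ≠ 0) (hp1 : p ≠ 1) (hpq : p ≠ q)
    (h1 : 0 < x₁) (h12 : x₁ < x₂) (h23 : x₂ < x₃) (e₁ : interpError p q a b c x₁ = 0)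
    (e₂ : interpError p q a b c x₂ = 0) (e₃ : interpError p q a b c x₃ = 0) :
    ∀ x, 0 < x → (interpError p q a b c x = 0 ↔ x = x₁ ∨ x = x₂ ∨ x = x₃) := by
  intro x hx
  refine ⟨fun hFx => ?_, by rintro (rfl | rfl | rfl) <;> assumption⟩
  by_contra! hne
  have hcoeff := genPoly_coeff_eq_zero (c := ![1, -a, -b, -c])
    (injective_interpError_exponents hq hp0 hp1 hpq) (z := ![x, x₁, x₂, x₃])
    (injective_vec4 hne.1 hne.2.1 hne.2.2 h12.ne (h12.trans h23).ne h23.ne)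
    (by simp [Fin.forall_fin_succ, hx, h1, h1.trans h12, (h1.trans h12).trans h23])
    (by simp [Fin.forall_fin_succ, ← interpError_eq_genPoly, hFx, e₁, e₂, e₃])
  simpa using congr_fun hcoeff 0

theorem existsUnique_interpError_zeros (hq : 1 < q) (hp0 : p ≠ 0) (hp1 : p ≠ 1) (hpq : p ≠ q)
    (h1 : 0 < x₁) (h12 : x₁ < x₂) (h23 : x₂ < x₃) :
    ∃! v : ℝ × ℝ × ℝ, ∀ x, 0 < x →
      (interpError p q v.1 v.2.1 v.2.2 x = 0 ↔ x = x₁ ∨ x = x₂ ∨ x = x₃) := by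
  have hr : Injective ![0, 1, q] := injective_vec3 zero_ne_one (by linarith) (by linarith)
  have hz : Injective ![x₁, x₂, x₃] := injective_vec3 h12.ne (h12.trans h23).ne h23.ne
  have hz0 : ∀ i, 0 < ![x₁, x₂, x₃] i := by
    simp [Fin.forall_fin_succ, h1, h1.trans h12, (h1.trans h12).trans h23]
  have hlin : ∀ (d : Fin 3 → ℝ) x, genPoly d ![0, 1, q] x = d 0 + d 1 * x + d 2 * x ^ q := by
    simp [genPoly, Fin.sum_univ_three]
  obtain ⟨d, hd⟩ := exists_genPoly_eq hr hz hz0 fun i => ![x₁, x₂, x₃] i ^ p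
  have hd' : ∀ i, interpError p q (d 0) (d 1) (d 2) (![x₁, x₂, x₃] i) = 0 := fun i => by
    rw [interpError, ← hlin, hd, sub_self]
  refine ⟨(d 0, d 1, d 2),
    interpError_eq_zero_iff hq hp0 hp1 hpq h1 h12 h23 (hd' 0) (hd' 1) (hd' 2), fun v hv => ?_⟩
  have hcoeff := genPoly_coeff_eq_zero hr hz hz0
    (c := ![v.1 - d 0, v.2.1 - d 1, v.2.2 - d 2]) fun i => by
      have hvi := (hv _ (hz0 i)).2 (by fin_cases i <;> simp)
      have hdi := hd' i
      simp only [interpError] at hvi hdi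
      simp only [hlin, Matrix.cons_val_zero, Matrix.cons_val_one, Matrix.cons_val_two,
        Matrix.tail_cons, Matrix.head_cons]
      linear_combination hdi - hvi
  exact Prod.ext (sub_eq_zero.1 (congr_fun hcoeff 0))
    (Prod.ext (sub_eq_zero.1 (congr_fun hcoeff 1)) (sub_eq_zero.1 (congr_fun hcoeff 2)))

theorem exists_interpErrorDeriv_zeros (hq : 1 < q) (hp0 : p ≠ 0) (hp1 : p ≠ 1) (hpq : p ≠ q)
    (h1 : 0 < x₁) (h12 : x₁ < x₂) (h23 : x₂ < x₃) (e₁ : interpError p q a b c x₁ = 0)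
    (e₂ : interpError p q a b c x₂ = 0) (e₃ : interpError p q a b c x₃ = 0) :
    ∃ s₁ ∈ Ioo x₁ x₂, ∃ s₂ ∈ Ioo x₂ x₃,
      ∀ x, 0 < x → (interpErrorDeriv p q b c x = 0 ↔ x = s₁ ∨ x = s₂) := by
  obtain ⟨s₁, hs₁, k₁⟩ := exists_hasDerivAt_eq_zero_of_pos (fun x hx => hasDerivAt_interpError hx)
    h1 h12 (e₁.trans e₂.symm)
  obtain ⟨s₂, hs₂, k₂⟩ := exists_hasDerivAt_eq_zero_of_pos (fun x hx => hasDerivAt_interpError hx)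
    (h1.trans h12) h23 (e₂.trans e₃.symm)
  refine ⟨s₁, hs₁, s₂, hs₂, fun x hx => ⟨fun hDx => ?_, by rintro (rfl | rfl) <;> assumption⟩⟩
  by_contra! hne
  have hr : Injective ![p - 1, 0, q - 1] :=
    injective_vec3 (sub_ne_zero.2 hp1) (sub_left_injective.ne hpq) (by linarith)
  have hcoeff := genPoly_coeff_eq_zero (c := ![p, -b, -(c * q)]) hr (z := ![x, s₁, s₂])
    (injective_vec3 hne.1 hne.2 (hs₁.2.trans hs₂.1).ne)
    (by simp [Fin.forall_fin_succ, hx, h1.trans hs₁.1, h1.trans (hs₁.1.trans (hs₁.2.trans hs₂.1))])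
    (by simpa [Fin.forall_fin_succ] using ⟨hDx, k₁, k₂⟩)
  exact hp0 (congr_fun hcoeff 0)

theorem interpError_altSigns_or (hq : 1 < q) (hp0 : p ≠ 0) (hp1 : p ≠ 1) (hpq : p ≠ q)
    (h1 : 0 < x₁) (h12 : x₁ < x₂) (h23 : x₂ < x₃)
    (hzero : ∀ x, 0 < x → (interpError p q a b c x = 0 ↔ x = x₁ ∨ x = x₂ ∨ x = x₃)) :
    AltSigns (interpError p q a b c) x₁ x₂ x₃ ∨ AltSigns (-interpError p q a b c) x₁ x₂ x₃ := by
  have h2 : 0 < x₂ := h1.trans h12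
  obtain ⟨s₁, hs₁, s₂, hs₂, hD⟩ := exists_interpErrorDeriv_zeros hq hp0 hp1 hpq h1 h12 h23
    ((hzero x₁ h1).2 (by simp)) ((hzero x₂ h2).2 (by simp)) ((hzero x₃ (h2.trans h23)).2 (by simp))
  refine altSigns_or_altSigns_neg h1 h12 h23 (fun x hx => hasDerivAt_interpError hx) hzero
    fun x hx hFx hDx => ?_
  rcases (hzero x hx).1 hFx with rfl | rfl | rfl <;> rcases (hD _ hx).1 hDx with rfl | rfl <;>
    linarith [hs₁.1, hs₁.2, hs₂.1, hs₂.2]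

theorem interpError_coeff_pos (hq : 1 < q) (hp : 1 < p) (hpq : p < q)
    (h1 : 0 < x₁) (h12 : x₁ < x₂) (h23 : x₂ < x₃) (e₁ : interpError p q a b c x₁ = 0)
    (e₂ : interpError p q a b c x₂ = 0) (e₃ : interpError p q a b c x₃ = 0) : 0 < c := by
  obtain ⟨s₁, hs₁, s₂, hs₂, hD⟩ := exists_interpErrorDeriv_zeros hq (by linarith) hp.ne'
    hpq.ne h1 h12 h23 e₁ e₂ e₃
  have hs₁0 : 0 < s₁ := h1.trans hs₁.1
  obtain ⟨t, ht, hD't⟩ := exists_hasDerivAt_eq_zero_of_pos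
    (fun x hx => hasDerivAt_genPoly _ _ hx) hs₁0 (hs₁.2.trans hs₂.1)
    (((hD s₁ hs₁0).2 (.inl rfl)).trans ((hD s₂ (hs₁0.trans (hs₁.2.trans hs₂.1))).2 (.inr rfl)).symm)
  have ht0 : 0 < t := hs₁0.trans ht.1
  simp [genPoly, Fin.sum_univ_three] at hD't
  have hbal : c * (q * (q - 1) * t ^ (q - 1 - 1)) = p * (p - 1) * t ^ (p - 1 - 1) := by
    linear_combination -hD't
  have hp' : 0 < p * (p - 1) * t ^ (p - 1 - 1) :=
    mul_pos (mul_pos (by linarith) (by linarith)) (rpow_pos_of_pos ht0 _)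
  have hq' : 0 < q * (q - 1) * t ^ (q - 1 - 1) :=
    mul_pos (mul_pos (by linarith) (by linarith)) (rpow_pos_of_pos ht0 _)
  exact pos_of_mul_pos_left (hbal ▸ hp') hq'.le

theorem tendsto_interpError_nhdsGT_zero (hp : p < 0) (hq : 0 < q) :
    Tendsto (interpError p q a b c) (𝓝[>] 0) atTop := by
  rw [interpError_eq_genPoly]
  exact tendsto_genPoly_nhdsGT_zero (i₀ := 0) hp one_pos
    (by simp [Fin.forall_fin_succ]; exact ⟨hp, hp.trans one_pos, hp.trans hq⟩)

theorem tendsto_interpError_atTop (hq : 1 < q) (hqp : q < p) :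
    Tendsto (interpError p q a b c) atTop atTop := by
  rw [interpError_eq_genPoly]
  exact tendsto_genPoly_atTop (i₀ := 0) (by simp; linarith) one_pos
    (by simp [Fin.forall_fin_succ]; exact ⟨by linarith, hq.trans hqp, hqp⟩)

theorem tendsto_interpError_atBot (hq : 1 < q) (hpq : p < q) (hc : 0 < c) :
    Tendsto (interpError p q a b c) atTop atBot := by
  rw [← tendsto_neg_atTop_iff, interpError_eq_genPoly]
  have := tendsto_genPoly_atTop (c := -![1, -a, -b, -c]) (r := ![p, 0, 1, q]) (i₀ := 3)
    (by simp; linarith) (by simpa using hc)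
    (by simp [Fin.forall_fin_succ]; exact ⟨hpq, by linarith, hq⟩)
  refine this.congr fun x => ?_
  simp [genPoly]

theorem tendsto_interpErrorDeriv_nhdsGT_zero (hp0 : 0 < p) (hp1 : p < 1) (hq : 1 < q) :
    Tendsto (interpErrorDeriv p q b c) (𝓝[>] 0) atTop :=
  tendsto_genPoly_nhdsGT_zero (i₀ := 0) (by simpa using hp1) hp0
    (by simp [Fin.forall_fin_succ]; exact ⟨hp1, hp1.trans hq⟩)

theorem interpError_neg_of_lt_one (hq : 1 < q) (hp0 : 0 < p) (hp1 : p < 1)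
    (h1 : 0 < x₁) (h12 : x₁ < x₂) (h23 : x₂ < x₃) (e₁ : interpError p q a b c x₁ = 0)
    (e₂ : interpError p q a b c x₂ = 0) (e₃ : interpError p q a b c x₃ = 0) :
    ∀ x ∈ Ioo 0 x₁, interpError p q a b c x < 0 := by
  obtain ⟨s₁, hs₁, s₂, hs₂, hD⟩ := exists_interpErrorDeriv_zeros hq hp0.ne' hp1.ne
    (by linarith) h1 h12 h23 e₁ e₂ e₃
  refine neg_of_tendsto_deriv_atTop (fun x hx => hasDerivAt_interpError hx.1)
    (tendsto_interpErrorDeriv_nhdsGT_zero hp0 hp1 hq) (fun x hx hDx => ?_) e₁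
  rcases (hD x hx.1).1 hDx with rfl | rfl <;> linarith [hx.2, hs₁.1, hs₂.1, hs₁.2]

end InterpError

theorem stmt_15_general (p q x₁ x₂ x₃ : ℝ) (hq : 2 < q)
    (hp0 : p ≠ 0) (hp1 : p ≠ 1) (hpq : p ≠ q)
    (h1 : 0 < x₁) (h12 : x₁ < x₂) (h23 : x₂ < x₃) :
    (∃! v : ℝ × ℝ × ℝ,
      ∀ x : ℝ, 0 < x →
        (x ^ p - (v.1 + v.2.1 * x + v.2.2 * x ^ q) = 0 ↔ x = x₁ ∨ x = x₂ ∨ x = x₃)) ∧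
    ∀ α β γ : ℝ,
      (∀ x : ℝ, 0 < x →
        (x ^ p - (α + β * x + γ * x ^ q) = 0 ↔ x = x₁ ∨ x = x₂ ∨ x = x₃)) →
      ((p < 0 ∨ (1 < p ∧ p < q)) →
        (∀ x ∈ Set.Ioo 0 x₁, 0 < x ^ p - (α + β * x + γ * x ^ q)) ∧
        (∀ x ∈ Set.Ioo x₁ x₂, x ^ p - (α + β * x + γ * x ^ q) < 0) ∧
        (∀ x ∈ Set.Ioo x₂ x₃, 0 < x ^ p - (α + β * x + γ * x ^ q)) ∧
        (∀ x ∈ Set.Ioi x₃, x ^ p - (α + β * x + γ * x ^ q) < 0)) ∧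
      (((0 < p ∧ p < 1) ∨ q < p) →
        (∀ x ∈ Set.Ioo 0 x₁, x ^ p - (α + β * x + γ * x ^ q) < 0) ∧
        (∀ x ∈ Set.Ioo x₁ x₂, 0 < x ^ p - (α + β * x + γ * x ^ q)) ∧
        (∀ x ∈ Set.Ioo x₂ x₃, x ^ p - (α + β * x + γ * x ^ q) < 0) ∧
        (∀ x ∈ Set.Ioi x₃, 0 < x ^ p - (α + β * x + γ * x ^ q))) := by
  have hq1 : 1 < q := by linarith
  have hq0 : 0 < q := by linarith
  refine ⟨existsUnique_interpError_zeros hq1 hp0 hp1 hpq h1 h12 h23, fun a b c hzero => ?_⟩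
  have hsigns := interpError_altSigns_or hq1 hp0 hp1 hpq h1 h12 h23 hzero
  have e₁ := (hzero x₁ h1).2 (by simp)
  have e₂ := (hzero x₂ (h1.trans h12)).2 (by simp)
  have e₃ := (hzero x₃ ((h1.trans h12).trans h23)).2 (by simp)
  have hmid : x₁ / 2 ∈ Ioo 0 x₁ := ⟨half_pos h1, half_lt_self h1⟩
  refine ⟨fun hp => ?_, fun hp => altSigns_neg_iff.1 ?_⟩
  · rcases hp with hp | ⟨hp1', hpq'⟩
    · obtain ⟨t, hFt, ht⟩ := (((tendsto_interpError_nhdsGT_zero hp hq0).eventually_gt_atTop 0).and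
        (Ioo_mem_nhdsGT h1)).exists
      exact hsigns.resolve_right fun h => (neg_pos.1 (h.1 t ht)).not_gt hFt
    · obtain ⟨t, hFt, ht⟩ := (((tendsto_interpError_atBot hq1 hpq'
        (interpError_coeff_pos hq1 hp1' hpq' h1 h12 h23 e₁ e₂ e₃)).eventually_lt_atBot 0).and
        (Ioi_mem_atTop x₃)).exists
      exact hsigns.resolve_right fun h => (neg_lt_zero.1 (h.2.2.2 t ht)).not_gt hFt
  · rcases hp with ⟨hp0', hp1'⟩ | hqp
    · exact hsigns.resolve_left fun h => (h.1 _ hmid).not_gt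
        (interpError_neg_of_lt_one hq1 hp0' hp1' h1 h12 h23 e₁ e₂ e₃ _ hmid)
    · obtain ⟨t, hFt, ht⟩ := (((tendsto_interpError_atTop hq1 hqp).eventually_gt_atTop 0).and
        (Ioi_mem_atTop x₃)).exists
      exact hsigns.resolve_left fun h => (h.2.2.2 t ht).not_gt hFt

theorem stmt_15 (p q x₁ x₂ x₃ : ℝ) (hq : 2 < q) (hp : -1 < p)
    (hp0 : p ≠ 0) (hp1 : p ≠ 1) (hpq : p ≠ q)
    (h1 : 0 < x₁) (h12 : x₁ < x₂) (h23 : x₂ < x₃) :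
    (∃! v : ℝ × ℝ × ℝ,
      ∀ x : ℝ, 0 < x →
        (x ^ p - (v.1 + v.2.1 * x + v.2.2 * x ^ q) = 0 ↔ x = x₁ ∨ x = x₂ ∨ x = x₃)) ∧
    ∀ α β γ : ℝ,
      (∀ x : ℝ, 0 < x →
        (x ^ p - (α + β * x + γ * x ^ q) = 0 ↔ x = x₁ ∨ x = x₂ ∨ x = x₃)) →
      ((p < 0 ∨ (1 < p ∧ p < q)) →
        (∀ x ∈ Set.Ioo 0 x₁, 0 < x ^ p - (α + β * x + γ * x ^ q)) ∧
        (∀ x ∈ Set.Ioo x₁ x₂, x ^ p - (α + β * x + γ * x ^ q) < 0) ∧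
        (∀ x ∈ Set.Ioo x₂ x₃, 0 < x ^ p - (α + β * x + γ * x ^ q)) ∧
        (∀ x ∈ Set.Ioi x₃, x ^ p - (α + β * x + γ * x ^ q) < 0)) ∧
      (((0 < p ∧ p < 1) ∨ q < p) →
        (∀ x ∈ Set.Ioo 0 x₁, x ^ p - (α + β * x + γ * x ^ q) < 0) ∧
        (∀ x ∈ Set.Ioo x₁ x₂, 0 < x ^ p - (α + β * x + γ * x ^ q)) ∧
        (∀ x ∈ Set.Ioo x₂ x₃, x ^ p - (α + β * x + γ * x ^ q) < 0) ∧
        (∀ x ∈ Set.Ioi x₃, 0 < x ^ p - (α + β * x + γ * x ^ q))) :=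
  stmt_15_general p q x₁ x₂ x₃ hq hp0 hp1 hpq h1 h12 h23
end

section
/- For any reals a₁ < a₂ < ⋯ < aₙ and b₁ < b₂ < ⋯ < bₙ, the matrix with entries exp(aᵢbⱼ) has positive determinant. -/
/-!
A kernel vector `c` of the matrix would give an exponential sum `∑ⱼ cⱼ exp (bⱼ t)` with
distinct rates vanishing at the `n` points `aᵢ`; by induction with Rolle's theorem such a sum
has at most `n - 1` zeros unless it is trivial, so the determinant never vanishes on the convex
set of pairs of increasing sequences. Hence its sign is constant there, and at `aᵢ = bᵢ = i` it
is the Vandermonde determinant of the increasing nodes `exp i`, which is positive.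
-/

open Real Finset

lemma IsPreconnected.lt_of_lt_of_forall_ne {X α : Type*} [TopologicalSpace X] [LinearOrder α]
    [TopologicalSpace α] [OrderClosedTopology α] {s : Set X} (hs : IsPreconnected s)
    {f : X → α} (hf : ContinuousOn f s) {c : α} (hne : ∀ x ∈ s, f x ≠ c) {a b : X}
    (ha : a ∈ s) (hb : b ∈ s) (hfa : c < f a) : c < f b := by
  by_contra! hfb
  obtain ⟨x, hx, hfx⟩ := hs.intermediate_value hb ha hf ⟨hfb, hfa.le⟩
  exact hne x hx hfx

lemma convex_setOf_strictMono {ι : Type*} [Preorder ι] :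
    Convex ℝ {f : ι → ℝ | StrictMono f} := by
  intro f hf g hg s t hs ht hst i j hij
  have hfij := hf hij
  have hgij := hg hij
  simp only [Pi.add_apply, Pi.smul_apply, smul_eq_mul]
  rcases hs.lt_or_eq with hs | rfl
  · nlinarith [mul_lt_mul_of_pos_left hfij hs, mul_le_mul_of_nonneg_left hgij.le ht]
  · obtain rfl : t = 1 := by linarith
    simpa using hgij

lemma hasDerivAt_sum_mul_exp {ι : Type*} (u : Finset ι) (c a : ι → ℝ) (t : ℝ) :
    HasDerivAt (fun t => ∑ i ∈ u, c i * exp (a i * t))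
      (∑ i ∈ u, c i * a i * exp (a i * t)) t := by
  refine HasDerivAt.fun_sum fun i _ => ?_
  simpa [mul_assoc, mul_comm (a i)] using
    (((hasDerivAt_id t).const_mul (a i)).exp).const_mul (c i)

lemma exists_strictMono_interlacing_deriv_eq_zero {n : ℕ} {f f' : ℝ → ℝ}
    (hf : ∀ t, HasDerivAt f (f' t) t) {x : Fin (n + 1) → ℝ} (hx : StrictMono x)
    (hzero : ∀ j, f (x j) = 0) : ∃ y : Fin n → ℝ, StrictMono y ∧ ∀ j, f' (y j) = 0 := by
  have hcont : Continuous f := continuous_iff_continuousAt.2 fun t => (hf t).continuousAt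
  have hrolle (j : Fin n) : ∃ y ∈ Set.Ioo (x j.castSucc) (x j.succ), f' y = 0 :=
    exists_hasDerivAt_eq_zero (hx Fin.castSucc_lt_succ) hcont.continuousOn
      (by rw [hzero, hzero]) fun t _ => hf t
  choose y hy hy' using hrolle
  refine ⟨y, fun j k hjk => ?_, hy'⟩
  calc y j < x j.succ := (hy j).2
    _ ≤ x k.castSucc := hx.monotone (Fin.succ_le_castSucc_iff.2 hjk)
    _ < y k := (hy k).1

lemma eq_zero_of_sum_mul_exp_eq_zero {n : ℕ} {a c x : Fin n → ℝ} (ha : Function.Injective a)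
    (hx : StrictMono x) (hzero : ∀ j, ∑ i, c i * exp (a i * x j) = 0) : c = 0 := by
  induction n with
  | zero => exact Subsingleton.elim _ _
  | succ n ih =>
    -- Dividing by `exp (a 0 * t)` makes the `0`-th term constant, so differentiating kills it.
    set g : ℝ → ℝ := fun t => ∑ i, c i * exp ((a i - a 0) * t)
    have hg (t : ℝ) : HasDerivAt g (∑ i, c i * (a i - a 0) * exp ((a i - a 0) * t)) t :=
      hasDerivAt_sum_mul_exp _ _ _ t
    have hg_zero (j : Fin (n + 1)) : g (x j) = 0 := by
      have : g (x j) = exp (-(a 0 * x j)) * ∑ i, c i * exp (a i * x j) := by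
        rw [Finset.mul_sum]
        refine Finset.sum_congr rfl fun i _ => ?_
        rw [mul_left_comm, ← exp_add]
        ring_nf
      rw [this, hzero, mul_zero]
    obtain ⟨y, hy, hy_zero⟩ := exists_strictMono_interlacing_deriv_eq_zero hg hx hg_zero
    have hrate_ne (i : Fin n) : a i.succ - a 0 ≠ 0 := sub_ne_zero.2 (ha.ne (Fin.succ_ne_zero i))
    have hsucc : (fun i : Fin n => c i.succ * (a i.succ - a 0)) = 0 := by
      refine ih (a := fun i => a i.succ - a 0) (fun i k h => ?_) hy fun j => ?_
      · exact Fin.succ_injective _ (ha (sub_left_injective h))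
      · simpa [Fin.sum_univ_succ] using hy_zero j
    have hc_succ (i : Fin n) : c i.succ = 0 :=
      (mul_eq_zero.1 (congrFun hsucc i)).resolve_right (hrate_ne i)
    have hc_zero : c 0 = 0 := by
      simpa [Fin.sum_univ_succ, hc_succ, exp_ne_zero] using hzero 0
    funext i
    cases i using Fin.cases with
    | zero => exact hc_zero
    | succ i => exact hc_succ i

lemma det_exp_mul_ne_zero {n : ℕ} {a b : Fin n → ℝ} (ha : StrictMono a)
    (hb : Function.Injective b) : (Matrix.of fun i j => exp (a i * b j)).det ≠ 0 := by
  intro hdet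
  obtain ⟨v, hv, hMv⟩ := Matrix.exists_mulVec_eq_zero_iff.2 hdet
  refine hv (eq_zero_of_sum_mul_exp_eq_zero hb ha fun i => ?_)
  simpa [Matrix.mulVec, dotProduct, mul_comm] using congrFun hMv i

lemma det_exp_mul_natCast_pos (n : ℕ) :
    0 < (Matrix.of fun i j : Fin n => exp ((i : ℝ) * j)).det := by
  have hvdm : (Matrix.of fun i j : Fin n => exp ((i : ℝ) * j)) =
      Matrix.vandermonde fun i => exp i := by
    ext i j
    simp [Matrix.vandermonde_apply, ← exp_nat_mul, mul_comm]
  rw [hvdm, Matrix.det_vandermonde]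
  refine Finset.prod_pos fun i _ => Finset.prod_pos fun j hj => sub_pos.2 ?_
  exact exp_lt_exp.2 (Nat.cast_lt.2 (Finset.mem_Ioi.1 hj : i < j))

theorem stmt_16 (n : ℕ) (a b : Fin n → ℝ) (ha : StrictMono a) (hb : StrictMono b) :
    0 < Matrix.det (Matrix.of fun i j => Real.exp (a i * b j)) := by
  let S := {f : Fin n → ℝ | StrictMono f} ×ˢ {f : Fin n → ℝ | StrictMono f}
  let D : (Fin n → ℝ) × (Fin n → ℝ) → ℝ := fun p =>
    (Matrix.of fun i j => exp (p.1 i * p.2 j)).det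
  have hS : IsPreconnected S :=
    (convex_setOf_strictMono.prod convex_setOf_strictMono).isPreconnected
  have hD : Continuous D := by fun_prop
  have hnat : StrictMono fun i : Fin n => (i : ℝ) := fun i j h => Nat.cast_lt.2 h
  exact hS.lt_of_lt_of_forall_ne hD.continuousOn
    (fun p hp => det_exp_mul_ne_zero hp.1 hp.2.injective) (show (_, _) ∈ S from ⟨hnat, hnat⟩)
    (show (a, b) ∈ S from ⟨ha, hb⟩) (det_exp_mul_natCast_pos n)
end
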